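/- arXiv:1904.10602 — 4 statements merged into one kernel-verified Lean document; each statement's English description precedes it below -/
import Mathlib

section
/- Let μ ⊆ λ be partitions with ℓ = ℓ(λ) ≤ n. Then the number of semistandard n-content tableaux of shape λ/μ satisfies |SSCT_n(λ/μ)| = det( binom(λ_i + n − i, μ_j + n − j) )_{1 ≤ i,j ≤ ℓ}. -/
open Finset MvPolynomial

/-- The cells `(i,j)` (1-indexed) of the skew shape `λ/μ`, where `l i = λ_i`, `m i = μ_i`,
and all rows with cells have index at most `L`. -/
def skewCells (l m : ℕ → ℕ) (L : ℕ) : Finset (ℕ × ℕ) :=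
  (Finset.Icc 1 L ×ˢ Finset.Icc 1 (l 1)).filter fun c => m c.1 < c.2 ∧ c.2 ≤ l c.1

/-- Bounded lecture hall tableaux `LHT_{n,m}` on a given cell set (tableaux are normalized
to be `0` outside the cells).  The lecture hall inequalities
`T(i,j)/(n+j-i) ≥ T(i,j+1)/(n+j+1-i)` and `T(i,j)/(n+j-i) > T(i+1,j)/(n+j-i-1)`
are written in cross-multiplied form. -/
def LHTb (n m : ℕ) (cells : Finset (ℕ × ℕ)) : Set ((ℕ × ℕ) → ℕ) :=
  {T | (∀ c, c ∉ cells → T c = 0) ∧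
    (∀ i j, (i, j) ∈ cells → (i, j + 1) ∈ cells →
      T (i, j + 1) * (n + j - i) ≤ T (i, j) * (n + j + 1 - i)) ∧
    (∀ i j, (i, j) ∈ cells → (i + 1, j) ∈ cells →
      T (i + 1, j) * (n + j - i) < T (i, j) * (n + j - i - 1)) ∧
    (∀ c ∈ cells, T c / (n + c.2 - c.1) < m)}

/-- Semistandard `n`-content tableaux on a given cell set: entries weakly decrease along
rows, strictly decrease down columns, and satisfy `T(i,j) < n + j - i`. -/
def SSCTset (n : ℕ) (cells : Finset (ℕ × ℕ)) : Set ((ℕ × ℕ) → ℕ) :=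
  {T | (∀ c, c ∉ cells → T c = 0) ∧
    (∀ i j, (i, j) ∈ cells → (i, j + 1) ∈ cells → T (i, j + 1) ≤ T (i, j)) ∧
    (∀ i j, (i, j) ∈ cells → (i + 1, j) ∈ cells → T (i + 1, j) < T (i, j)) ∧
    (∀ c ∈ cells, T c < n + c.2 - c.1)}

/-- Semistandard Young tableaux with entries in `{0,…,n-1}` on a given cell set. -/
def SSYTset (n : ℕ) (cells : Finset (ℕ × ℕ)) : Set ((ℕ × ℕ) → ℕ) :=
  {T | (∀ c, c ∉ cells → T c = 0) ∧
    (∀ i j, (i, j) ∈ cells → (i, j + 1) ∈ cells → T (i, j + 1) ≤ T (i, j)) ∧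
    (∀ i j, (i, j) ∈ cells → (i + 1, j) ∈ cells → T (i + 1, j) < T (i, j)) ∧
    (∀ c ∈ cells, T c < n)}

/-- Standard Young tableaux on a given cell set: each of `1,…,N` (where `N` is the number
of cells) appears exactly once, and entries decrease along rows and down columns. -/
def SYTset (cells : Finset (ℕ × ℕ)) : Set ((ℕ × ℕ) → ℕ) :=
  {T | (∀ c, c ∉ cells → T c = 0) ∧
    (∀ k, 1 ≤ k → k ≤ cells.card → ∃! c, c ∈ cells ∧ T c = k) ∧
    (∀ i j, (i, j) ∈ cells → (i, j + 1) ∈ cells → T (i, j + 1) < T (i, j)) ∧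
    (∀ i j, (i, j) ∈ cells → (i + 1, j) ∈ cells → T (i + 1, j) < T (i, j))}

/-- The generating polynomial `L^n(x) = Σ_L Π x_{⌊L(i,j)/(n+j-i)⌋}` of bounded
lecture hall tableaux. -/
noncomputable def lhtGF {R : Type*} [CommSemiring R] (n m : ℕ) (cells : Finset (ℕ × ℕ))
    (x : ℕ → R) : R :=
  ∑ᶠ T ∈ LHTb n m cells, ∏ c ∈ cells, x (T c / (n + c.2 - c.1))

/-- The generating polynomial `S^n(y) = Σ_S Π y_{S(i,j)}` of semistandard `n`-content
tableaux. -/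
noncomputable def ssctGF {R : Type*} [CommSemiring R] (n : ℕ) (cells : Finset (ℕ × ℕ))
    (y : ℕ → R) : R :=
  ∑ᶠ T ∈ SSCTset n cells, ∏ c ∈ cells, y (T c)

/-- The Schur polynomial `s_λ(z_1,…,z_n) = Σ_{T ∈ SSYT_n(λ)} Π z_{T(i,j)+1}`. -/
noncomputable def schurGF {R : Type*} [CommSemiring R] (n L : ℕ) (l : ℕ → ℕ) (z : ℕ → R) : R :=
  ∑ᶠ T ∈ SSYTset n (skewCells l (fun _ => 0) L),
    ∏ c ∈ skewCells l (fun _ => 0) L, z (T c + 1)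

/-- The one-row partition `(k)`. -/
def rowShape (k : ℕ) : ℕ → ℕ := fun i => if i = 1 then k else 0

/-- `L^N_{(k)}(x)` for an integer `k`, equal to `0` when `k < 0`. -/
noncomputable def lhtRowGF {R : Type*} [CommSemiring R] (N m : ℕ) (k : ℤ) (x : ℕ → R) : R :=
  if k < 0 then 0 else lhtGF N m (skewCells (rowShape k.toNat) (fun _ => 0) 1) x

/-- `S^N_{(k)}(y)` for an integer `k`, equal to `0` when `k < 0`. -/
noncomputable def ssctRowGF {R : Type*} [CommSemiring R] (N : ℕ) (k : ℤ) (y : ℕ → R) : R :=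
  if k < 0 then 0 else ssctGF N (skewCells (rowShape k.toNat) (fun _ => 0) 1) y

/-- The complete homogeneous polynomial `h_k(z_0,…,z_a)`. -/
noncomputable def hpoly {R : Type*} [CommSemiring R] (k a : ℕ) (z : ℕ → R) : R :=
  ∑ s ∈ (Finset.range (a + 1)).sym k, (Multiset.map z s.1).prod

/-- `h_k(z_0,…,z_a)` for an integer `k`, equal to `0` when `k < 0`. -/
noncomputable def hpolyZ {R : Type*} [CommSemiring R] (k : ℤ) (a : ℕ) (z : ℕ → R) : R :=
  if k < 0 then 0 else hpoly k.toNat a z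

/-- Partitions `p` with `lo ⊆ p ⊆ hi`, of length at most `L`, normalized so that
`p 0 = 0` (indices `≥ 1` carry the parts). -/
def PartitionsBetween (lo hi : ℕ → ℕ) (L : ℕ) : Set (ℕ → ℕ) :=
  {p | p 0 = 0 ∧ (∀ i j, 1 ≤ i → i ≤ j → p j ≤ p i) ∧ (∀ i, L < i → p i = 0) ∧
    ∀ i, 1 ≤ i → lo i ≤ p i ∧ p i ≤ hi i}

/-- Extended `n`-lecture hall tableaux with marks in `{0,…,m-1} ∪ {∞}`; a cell carries a
pair (value, mark), where the mark `m` encodes `∞`. -/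
def LHTstar (n m : ℕ) (cells : Finset (ℕ × ℕ)) : Set ((ℕ × ℕ) → ℕ × ℕ) :=
  {T | (∀ c, c ∉ cells → T c = (0, 0)) ∧
    (∀ c ∈ cells, (T c).1 < n + c.2 - c.1 ∧ (T c).2 ≤ m) ∧
    (∀ i j, (i, j) ∈ cells → (i, j + 1) ∈ cells →
      (T (i, j + 1)).2 < (T (i, j)).2 ∨
        ((T (i, j + 1)).2 = (T (i, j)).2 ∧ (T (i, j + 1)).1 ≤ (T (i, j)).1)) ∧
    (∀ i j, (i, j) ∈ cells → (i + 1, j) ∈ cells →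
      (T (i + 1, j)).2 < (T (i, j)).2 ∨
        ((T (i + 1, j)).2 = (T (i, j)).2 ∧ (T (i + 1, j)).1 < (T (i, j)).1))}

/-- Marked semistandard `n`-content tableaux with marks in `{0,…,m-1} ∪ {∞}` (the mark `m`
encodes `∞`): the values form a semistandard `n`-content tableau and marks are arbitrary. -/
def SSCTstar (n m : ℕ) (cells : Finset (ℕ × ℕ)) : Set ((ℕ × ℕ) → ℕ × ℕ) :=
  {T | (∀ c, c ∉ cells → T c = (0, 0)) ∧
    (∀ c ∈ cells, (T c).1 < n + c.2 - c.1 ∧ (T c).2 ≤ m) ∧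
    (∀ i j, (i, j) ∈ cells → (i, j + 1) ∈ cells → (T (i, j + 1)).1 ≤ (T (i, j)).1) ∧
    (∀ i j, (i, j) ∈ cells → (i + 1, j) ∈ cells → (T (i + 1, j)).1 < (T (i, j)).1)}

/-- `r^{(n)}_μ`: the number of fillings of `μ` with positive integers, strictly decreasing
along rows, weakly decreasing down columns, entries in row `i` lying in `{1,…,n-i}`. -/
noncomputable def rcount (n L : ℕ) (mu : ℕ → ℕ) : ℕ :=
  Nat.card {T : (ℕ × ℕ) → ℕ |
    (∀ c, c ∉ skewCells mu (fun _ => 0) L → T c = 0) ∧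
    (∀ c ∈ skewCells mu (fun _ => 0) L, 1 ≤ T c ∧ T c ≤ n - c.1) ∧
    (∀ i j, (i, j) ∈ skewCells mu (fun _ => 0) L →
      (i, j + 1) ∈ skewCells mu (fun _ => 0) L → T (i, j + 1) < T (i, j)) ∧
    (∀ i j, (i, j) ∈ skewCells mu (fun _ => 0) L →
      (i + 1, j) ∈ skewCells mu (fun _ => 0) L → T (i + 1, j) ≤ T (i, j))}

/-!
Row `r` of a tableau `T` is read as a lattice path from `(0, -(μ_r + n - r))` to
`(λ_r + n - r, 0)` whose flat steps sit at the abscissae `n + j - r - 1 - T(r, j)`: weakly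
decreasing rows give strictly increasing flat steps, the bound `T(r, j) < n + j - r` keeps them
inside the path, and strict decrease down the columns says exactly that consecutive paths never
touch. So `SSCT_n(λ/μ)` is in bijection with the non-intersecting families of these paths, which
the Lindström–Gessel–Viennot lemma counts by `det(binom(λ_i + n - i, μ_j + n - j))`: exchanging the
initial segments of the first two paths to meet, up to their first meeting point, is a
sign-reversing involution on the intersecting path systems.
-/

namespace Finset

/-- The `k`-th smallest element of `s`, counting from `0` (junk value `0` once `#s ≤ k`). -/
noncomputable def nth (s : Finset ℕ) (k : ℕ) : ℕ := Nat.nth (· ∈ s) k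

variable {s : Finset ℕ} {k k' a x : ℕ}

lemma count_mem_eq_card_inter_range (s : Finset ℕ) (x : ℕ) :
    Nat.count (· ∈ s) x = #(s ∩ range x) := by
  rw [Nat.count_eq_card_filter_range, filter_mem_eq_inter, inter_comm]

lemma nth_mem (h : k < #s) : s.nth k ∈ s :=
  Nat.nth_mem_of_lt_card s.finite_toSet (by simpa using h)

lemma nth_lt_nth (h : k < k') (h' : k' < #s) : s.nth k < s.nth k' :=
  Nat.nth_lt_nth_of_lt_card s.finite_toSet h (by simpa using h')

lemma exists_nth_eq {d : ℕ} (hd : d ∈ s) : ∃ k < #s, s.nth k = d := by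
  simpa [nth] using Nat.exists_lt_card_finite_nth_eq s.finite_toSet hd

lemma card_inter_range_nth (h : k < #s) : #(s ∩ range (s.nth k)) = k := by
  rw [← count_mem_eq_card_inter_range]
  exact Nat.count_nth_of_lt_card_finite s.finite_toSet (by simpa using h)

lemma nth_card_inter_range {d : ℕ} (hd : d ∈ s) : s.nth #(s ∩ range d) = d := by
  rw [← count_mem_eq_card_inter_range]
  exact Nat.nth_count hd

lemma nth_lt_iff (h : k < #s) : s.nth k < x ↔ k < #(s ∩ range x) := by
  rw [← count_mem_eq_card_inter_range]
  refine ⟨fun hx => ?_, Nat.nth_lt_of_lt_count⟩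
  calc k < Nat.count (· ∈ s) (s.nth k + 1) := by
        rw [Nat.count_succ, if_pos (nth_mem h), count_mem_eq_card_inter_range,
          card_inter_range_nth h]
        omega
    _ ≤ Nat.count (· ∈ s) x := Nat.count_monotone _ hx

lemma nth_add_card_le (hs : s ⊆ range a) (h : k < #s) : s.nth k + #s ≤ a + k := by
  have hsplit := card_filter_add_card_filter_not (s := s) (· < s.nth k)
  have hbelow : #{d ∈ s | d < s.nth k} = k := by
    conv_rhs => rw [← card_inter_range_nth h]
    congr 1; ext; simp
  have habove : {d ∈ s | ¬d < s.nth k} ⊆ Ico (s.nth k) a := fun d hd => by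
    simp only [mem_filter, not_lt] at hd
    simpa [hd.2] using hs hd.1
  have := card_le_card habove
  simp only [Nat.card_Ico] at this
  omega

lemma nth_image_Ioc {b j : ℕ} {w : ℕ → ℕ} (hw : StrictMonoOn w (Set.Ioc a b))
    (hj : j ∈ Ioc a b) : ((Ioc a b).image w).nth (j - a - 1) = w j := by
  have hbelow : (Ioc a b).image w ∩ range (w j) = (Ioo a j).image w := by
    ext d
    simp only [mem_inter, mem_image, mem_Ioc, mem_Ioo, mem_range]
    constructor
    · rintro ⟨⟨i, hi, rfl⟩, hij⟩
      refine ⟨i, ⟨hi.1, ?_⟩, rfl⟩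
      by_contra! hji
      exact hij.not_ge (hw.monotoneOn (by simpa using hj) (by simpa using hi) hji)
    · rintro ⟨i, hi, rfl⟩
      simp only [mem_Ioc] at hj
      exact ⟨⟨i, ⟨hi.1, by omega⟩, rfl⟩, hw (by simp; omega) (by simpa using hj) hi.2⟩
  have hcard : #((Ioo a j).image w) = j - a - 1 := by
    rw [card_image_of_injOn (hw.injOn.mono fun i hi => by simp at hi ⊢; simp at hj; omega),
      Nat.card_Ioo]
  rw [← hcard, ← hbelow]
  exact nth_card_inter_range (mem_image_of_mem w hj)

lemma forall_card_inter_range_le_iff {X Y : Finset ℕ} {c : ℕ} (hY : Y ⊆ range a) :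
    (∀ x ≤ a, #(Y ∩ range x) ≤ #(X ∩ range x) + c) ↔
      ∀ k, k + c < #Y → k < #X ∧ X.nth k ≤ Y.nth (k + c) := by
  constructor
  · intro hcount k hk
    have hya : Y.nth (k + c) < a := mem_range.1 (hY (nth_mem hk))
    have hX := hcount (Y.nth (k + c) + 1) hya
    have hkX : k < #(X ∩ range (Y.nth (k + c) + 1)) := by
      have := (nth_lt_iff hk).1 (Nat.lt_add_one (Y.nth (k + c)))
      omega
    have hk' : k < #X := hkX.trans_le (card_le_card inter_subset_left)
    exact ⟨hk', Nat.lt_succ_iff.1 ((nth_lt_iff hk').2 hkX)⟩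
  · intro hnth x _
    by_contra! hlt
    set t := #(Y ∩ range x)
    have htY : t ≤ #Y := card_le_card inter_subset_left
    obtain ⟨hk, hle⟩ := hnth (t - 1 - c) (by omega)
    have hY' : Y.nth (t - 1 - c + c) < x := (nth_lt_iff (by omega)).2 (by omega)
    have := (nth_lt_iff hk).1 (hle.trans_lt hY')
    omega

end Finset

namespace LatticePath

/-- A finset `s ⊆ range a` encodes the lattice path from `(0, -#s)` to `(a, 0)` whose up-steps
start at the abscissae in `s`; this is its height at abscissa `x`. -/
def height (s : Finset ℕ) (x : ℕ) : ℤ := #(s ∩ range x) - #s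

variable {s t u : Finset ℕ} {a x y : ℕ}

lemma height_zero (s : Finset ℕ) : height s 0 = -#s := by simp [height]

lemma height_le_height_succ (s : Finset ℕ) (x : ℕ) : height s x ≤ height s (x + 1) := by
  have := card_le_card
    (inter_subset_inter_left (s := s) (range_subset_range.2 (Nat.le_add_right x 1)))
  simp only [height]; omega

lemma height_succ_le (s : Finset ℕ) (x : ℕ) : height s (x + 1) ≤ height s x + 1 := by
  have : s ∩ range (x + 1) ⊆ insert x (s ∩ range x) := fun d hd => by
    simp only [mem_inter, mem_range, mem_insert] at hd ⊢; grind
  have := (card_le_card this).trans (card_insert_le _ _)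
  simp only [height]; omega

lemma height_nonpos (s : Finset ℕ) (x : ℕ) : height s x ≤ 0 := by
  have := card_le_card (inter_subset_left (s₁ := s) (s₂ := range x))
  simp only [height]; omega

lemma height_eq_zero (hs : s ⊆ range a) (hx : a ≤ x) : height s x = 0 := by
  rw [height, inter_eq_left.2 (hs.trans (range_subset_range.2 hx)), sub_self]

/-- A discrete intermediate value theorem: `height t - height s` drops by at most one per step. -/
lemma exists_height_eq_of_lt_of_le {N : ℕ} (h0 : height s 0 < height t 0)
    (hN : height t N ≤ height s N) : ∃ x ≤ N, height s x = height t x := by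
  have hex : ∃ x, height t x ≤ height s x := ⟨N, hN⟩
  have hpos : Nat.find hex ≠ 0 := fun h => by have := Nat.find_spec hex; rw [h] at this; omega
  obtain ⟨x, hx⟩ : ∃ x, Nat.find hex = x + 1 := Nat.exists_eq_add_one_of_ne_zero hpos
  have hprev := Nat.find_min hex (show x < Nat.find hex by omega)
  have hstep := height_le_height_succ t x
  have hstep' := height_succ_le s x
  have hfind := Nat.find_spec hex
  rw [hx] at hfind
  exact ⟨x + 1, hx ▸ Nat.find_min' hex hN, by omega⟩

lemma height_range_sdiff {D : Finset ℕ} (hD : D ⊆ range a) (hx : x ≤ a) :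
    height (range a \ D) x = (x - #(D ∩ range x) : ℤ) - (a - #D) := by
  have hinter : (range a \ D) ∩ range x = range x \ (D ∩ range x) := by
    ext d; by_cases d ∈ D <;> simp [*]; omega
  have hcap := card_le_card (inter_subset_right (s₁ := D) (s₂ := range x))
  rw [height, hinter, card_sdiff_of_subset inter_subset_right, card_sdiff_of_subset hD]
  simp only [card_range] at hcap ⊢
  have := card_le_card hD
  simp only [card_range] at this
  push_cast [hcap, this]
  ring

lemma forall_height_lt_iff {D E : Finset ℕ} {a b c : ℕ} (hD : D ⊆ range a) (hE : E ⊆ range b)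
    (hba : b ≤ a) (hc : a - #D = b - #E + c + 1) :
    (∀ x ≤ b, height (range a \ D) x < height (range b \ E) x) ↔
      ∀ k, k + c < #E → k < #D ∧ D.nth k ≤ E.nth (k + c) := by
  rw [← forall_card_inter_range_le_iff hE]
  refine forall₂_congr fun x hx => ?_
  have := card_le_card hD
  have := card_le_card hE
  simp only [card_range] at *
  rw [height_range_sdiff hD (hx.trans hba), height_range_sdiff hE hx]
  omega

def splice (s t : Finset ℕ) (x : ℕ) : Finset ℕ := s ∩ range x ∪ t \ range x

@[simp] lemma splice_self : splice s s x = s := by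
  ext d; simp only [splice, mem_union, mem_inter, mem_sdiff]; tauto

@[simp] lemma splice_splice_left : splice (splice s t x) u x = splice s u x := by
  ext d; simp only [splice, mem_union, mem_inter, mem_sdiff]; tauto

@[simp] lemma splice_splice_right : splice s (splice t u x) x = splice s u x := by
  ext d; simp only [splice, mem_union, mem_inter, mem_sdiff]; tauto

lemma splice_inter_range (hy : y ≤ x) : splice s t x ∩ range y = s ∩ range y := by
  ext d; simp only [splice, mem_union, mem_inter, mem_sdiff, mem_range]; grind

lemma card_splice (h : height s x = height t x) : #(splice s t x) = #s := by
  have hdisj : Disjoint (s ∩ range x) (t \ range x) :=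
    disjoint_left.2 fun d hd hd' => (mem_sdiff.1 hd').2 (mem_inter.1 hd).2
  have := card_sdiff_add_card_inter t (range x)
  simp only [height] at h
  rw [splice, card_union_of_disjoint hdisj]
  omega

lemma splice_subset_range (hs : s ∩ range x ⊆ range a)
    (ht : t ⊆ range a) : splice s t x ⊆ range a :=
  union_subset hs (sdiff_subset.trans ht)

variable {L : ℕ} {A B : Fin L → ℕ} {S : Fin L → Finset ℕ} {p q : Fin L}

def swapHeads (S : Fin L → Finset ℕ) (p q : Fin L) (x : ℕ) : Fin L → Finset ℕ :=
  fun k => splice (S (Equiv.swap p q k)) (S k) x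

lemma height_swap_apply (h : height (S p) x = height (S q) x) (k : Fin L) :
    height (S (Equiv.swap p q k)) x = height (S k) x := by
  rcases eq_or_ne k p with rfl | hp
  · rw [Equiv.swap_apply_left, h]
  rcases eq_or_ne k q with rfl | hq
  · rw [Equiv.swap_apply_right, h]
  rw [Equiv.swap_apply_of_ne_of_ne hp hq]

lemma card_swapHeads (h : height (S p) x = height (S q) x) (k : Fin L) :
    #(swapHeads S p q x k) = #(S (Equiv.swap p q k)) :=
  card_splice (height_swap_apply h k)

lemma height_swapHeads (h : height (S p) x = height (S q) x) (hy : y ≤ x) (k : Fin L) :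
    height (swapHeads S p q x k) y = height (S (Equiv.swap p q k)) y := by
  rw [height, card_swapHeads h, swapHeads, splice_inter_range hy, height]

lemma swapHeads_swapHeads : swapHeads (swapHeads S p q x) p q x = S := by
  funext k; simp [swapHeads]

def meetPairs (A : Fin L → ℕ) (S : Fin L → Finset ℕ) (x : ℕ) : Finset (Fin L × Fin L) :=
  {pq | pq.1 < pq.2 ∧ x ≤ A pq.2 ∧ height (S pq.1) x = height (S pq.2) x}

def IsCrossing (A : Fin L → ℕ) (S : Fin L → Finset ℕ) : Prop := ∃ x, (meetPairs A S x).Nonempty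

def IsNonIntersecting (A : Fin L → ℕ) (S : Fin L → Finset ℕ) : Prop :=
  ∀ p q, p < q → ∀ x ≤ A q, height (S p) x < height (S q) x

lemma isNonIntersecting_of_succ (hA : StrictAnti A)
    (h : ∀ p q : Fin L, q.1 = p.1 + 1 → ∀ x ≤ A q, height (S p) x < height (S q) x) :
    IsNonIntersecting A S := by
  suffices ∀ d (p q : Fin L), q.1 = p.1 + d + 1 → ∀ x ≤ A q, height (S p) x < height (S q) x from
    fun p q hpq => this (q.1 - p.1 - 1) p q (by have : p.1 < q.1 := hpq; omega)
  intro d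
  induction d with
  | zero => exact fun p q hq => h p q hq
  | succ d ih =>
    intro p q hq x hx
    let m : Fin L := ⟨p.1 + d + 1, by omega⟩
    have hmq : m < q := Fin.lt_def.2 (by simp [m]; omega)
    exact (ih p m rfl x (hx.trans (hA hmq).le)).trans (h m q (by simp [m]; omega) x hx)

noncomputable def firstMeet (hc : IsCrossing A S) : ℕ := Nat.find hc

noncomputable def firstPair (hc : IsCrossing A S) : Fin L × Fin L := (Nat.find_spec hc).choose

noncomputable def crossSwap (hc : IsCrossing A S) : Fin L → Finset ℕ :=
  swapHeads S (firstPair hc).1 (firstPair hc).2 (firstMeet hc)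

lemma firstPair_spec (hc : IsCrossing A S) :
    (firstPair hc).1 < (firstPair hc).2 ∧ firstMeet hc ≤ A (firstPair hc).2 ∧
      height (S (firstPair hc).1) (firstMeet hc) = height (S (firstPair hc).2) (firstMeet hc) :=
  (mem_filter.1 (Nat.find_spec hc).choose_spec).2

lemma height_crossSwap (hc : IsCrossing A S) (hy : y ≤ firstMeet hc) (k : Fin L) :
    height (crossSwap hc k) y =
      height (S (Equiv.swap (firstPair hc).1 (firstPair hc).2 k)) y :=
  height_swapHeads (firstPair_spec hc).2.2 hy k

lemma meetPairs_crossSwap_firstMeet (hc : IsCrossing A S) :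
    meetPairs A (crossSwap hc) (firstMeet hc) = meetPairs A S (firstMeet hc) := by
  ext pq
  simp only [meetPairs, mem_filter, mem_univ, true_and, height_crossSwap hc le_rfl,
    height_swap_apply (firstPair_spec hc).2.2]

lemma min_apply_swap_firstMeet_le (hA : StrictAnti A) (hc : IsCrossing A S) (k : Fin L) :
    min (A (Equiv.swap (firstPair hc).1 (firstPair hc).2 k)) (firstMeet hc) ≤ A k := by
  obtain ⟨hpq, hx, -⟩ := firstPair_spec hc
  rcases eq_or_ne k (firstPair hc).1 with rfl | hp
  · have := hA hpq; rw [Equiv.swap_apply_left]; omega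
  rcases eq_or_ne k (firstPair hc).2 with rfl | hq
  · rw [Equiv.swap_apply_right]; omega
  · rw [Equiv.swap_apply_of_ne_of_ne hp hq]; omega

/-- Before the first meeting point the swap only permutes the paths, so a meeting of the swapped
system there would already be a meeting of `S`. -/
lemma meetPairs_crossSwap_eq_empty (hA : StrictAnti A) (hc : IsCrossing A S)
    (hy : y < firstMeet hc) : meetPairs A (crossSwap hc) y = ∅ := by
  set τ := Equiv.swap (firstPair hc).1 (firstPair hc).2
  have hτ : ∀ k, y ≤ A k → y ≤ A (τ k) := fun k hk => by
    have := min_apply_swap_firstMeet_le hA hc (τ k)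
    rw [Equiv.swap_apply_self] at this
    omega
  refine eq_empty_of_forall_notMem fun ⟨p, q⟩ hpq => Nat.find_min hc hy ?_
  simp only [meetPairs, mem_filter, mem_univ, true_and,
    height_crossSwap hc hy.le] at hpq
  obtain ⟨hlt, hyq, heq⟩ := hpq
  change height (S (τ p)) y = height (S (τ q)) y at heq
  have hyp : y ≤ A p := hyq.trans (hA hlt).le
  rcases lt_or_gt_of_ne (τ.injective.ne hlt.ne) with h | h
  · exact ⟨(τ p, τ q), by simp [meetPairs, h, hτ q hyq, heq]⟩
  · exact ⟨(τ q, τ p), by simp [meetPairs, h, hτ p hyp, heq.symm]⟩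

lemma isCrossing_crossSwap (hc : IsCrossing A S) : IsCrossing A (crossSwap hc) :=
  ⟨firstMeet hc, by rw [meetPairs_crossSwap_firstMeet]; exact Nat.find_spec hc⟩

lemma firstMeet_crossSwap (hA : StrictAnti A) (hc : IsCrossing A S) :
    firstMeet (isCrossing_crossSwap hc) = firstMeet hc := by
  refine le_antisymm (Nat.find_min' _ ?_) ?_
  · rw [meetPairs_crossSwap_firstMeet]; exact Nat.find_spec hc
  by_contra! hlt
  have := Nat.find_spec (isCrossing_crossSwap hc)
  rw [← firstMeet, meetPairs_crossSwap_eq_empty hA hc hlt] at this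
  exact not_nonempty_empty this

lemma firstPair_crossSwap (hA : StrictAnti A) (hc : IsCrossing A S) :
    firstPair (isCrossing_crossSwap hc) = firstPair hc := by
  have e : meetPairs A (crossSwap hc) (firstMeet (isCrossing_crossSwap hc)) =
      meetPairs A S (firstMeet hc) := by
    rw [firstMeet_crossSwap hA hc, meetPairs_crossSwap_firstMeet]
  unfold firstPair
  congr 1
  exact congrArg _ e

lemma crossSwap_crossSwap (hA : StrictAnti A) (hc : IsCrossing A S) :
    crossSwap (isCrossing_crossSwap hc) = S := by
  rw [crossSwap, firstPair_crossSwap hA hc, firstMeet_crossSwap hA hc]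
  exact swapHeads_swapHeads

def pathSystems (A B : Fin L → ℕ) : Finset (Σ _ : Equiv.Perm (Fin L), Fin L → Finset ℕ) :=
  univ.sigma fun σ => Fintype.piFinset fun i => powersetCard (B (σ i)) (range (A i))

instance : DecidablePred (IsNonIntersecting A) := fun S => by
  unfold IsNonIntersecting; infer_instance

def nonIntersecting (A B : Fin L → ℕ) : Finset (Fin L → Finset ℕ) :=
  {S ∈ Fintype.piFinset fun i => powersetCard (B i) (range (A i)) | IsNonIntersecting A S}

lemma mem_pathSystems {z : Σ _ : Equiv.Perm (Fin L), Fin L → Finset ℕ} :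
    z ∈ pathSystems A B ↔ ∀ i, z.2 i ⊆ range (A i) ∧ #(z.2 i) = B (z.1 i) := by
  simp [pathSystems]

lemma mem_nonIntersecting :
    S ∈ nonIntersecting A B ↔
      (∀ i, S i ⊆ range (A i) ∧ #(S i) = B i) ∧ IsNonIntersecting A S := by
  simp [nonIntersecting]

lemma det_choose_eq_sum_sign (A B : Fin L → ℕ) :
    (Matrix.of fun i j => ((A i).choose (B j) : ℤ)).det =
      ∑ z ∈ pathSystems A B, (Equiv.Perm.sign z.1 : ℤ) := by
  rw [← Matrix.det_transpose, Matrix.det_apply', pathSystems, sum_sigma]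
  refine sum_congr rfl fun σ _ => ?_
  simp [mul_comm]

lemma crossSwap_mem_pathSystems (hA : StrictAnti A) {σ : Equiv.Perm (Fin L)}
    (hz : ⟨σ, S⟩ ∈ pathSystems A B) (hc : IsCrossing A S) :
    ⟨σ * Equiv.swap (firstPair hc).1 (firstPair hc).2, crossSwap hc⟩ ∈ pathSystems A B := by
  set τ := Equiv.swap (firstPair hc).1 (firstPair hc).2
  rw [mem_pathSystems] at hz ⊢
  intro i
  refine ⟨splice_subset_range ?_ (hz i).1, ?_⟩
  · have hτ : min (A (τ i)) (firstMeet hc) ≤ A i := min_apply_swap_firstMeet_le hA hc i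
    intro d hd
    have := (hz (τ i)).1 (mem_inter.1 hd).1
    simp only [mem_inter, mem_range] at hd this ⊢
    omega
  · exact (card_swapHeads (firstPair_spec hc).2.2 i).trans (hz (τ i)).2

open Classical in
lemma sum_sign_filter_isCrossing (hA : StrictAnti A) :
    ∑ z ∈ pathSystems A B with IsCrossing A z.2, (Equiv.Perm.sign z.1 : ℤ) = 0 := by
  refine sum_involution (fun z hz => ⟨z.1 * Equiv.swap (firstPair (mem_filter.1 hz).2).1
      (firstPair (mem_filter.1 hz).2).2, crossSwap (mem_filter.1 hz).2⟩) ?_ ?_ ?_ ?_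
  · intro z hz
    simp [Equiv.Perm.sign_swap (firstPair_spec (mem_filter.1 hz).2).1.ne]
  · intro z hz _ h
    have := congrArg Sigma.fst h
    simp only [mul_eq_left, Equiv.swap_eq_one_iff] at this
    exact (firstPair_spec (mem_filter.1 hz).2).1.ne this
  · intro z hz
    obtain ⟨hz, hc⟩ := mem_filter.1 hz
    exact mem_filter.2 ⟨crossSwap_mem_pathSystems hA hz hc, isCrossing_crossSwap hc⟩
  · intro z hz
    obtain ⟨-, hc⟩ := mem_filter.1 hz
    ext
    · simp [firstPair_crossSwap hA hc, mul_assoc]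
    · exact heq_of_eq (crossSwap_crossSwap hA hc)

lemma isCrossing_of_height_lt (hpq : p < q)
    (h0 : height (S q) 0 < height (S p) 0) (hq : S q ⊆ range (A q)) : IsCrossing A S := by
  obtain ⟨x, hx, heq⟩ := exists_height_eq_of_lt_of_le h0
    ((height_nonpos _ _).trans_eq (height_eq_zero hq le_rfl).symm)
  exact ⟨x, (p, q), by simp [meetPairs, hpq, hx, heq.symm]⟩

lemma eq_one_of_not_isCrossing (hB : StrictAnti B) {σ : Equiv.Perm (Fin L)}
    (hz : ⟨σ, S⟩ ∈ pathSystems A B) (hnc : ¬IsCrossing A S) : σ = 1 := by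
  rw [mem_pathSystems] at hz
  have hσ : StrictMono σ := fun p q hpq => by
    by_contra! hle
    have hB' := hB (lt_of_le_of_ne hle (σ.injective.ne hpq.ne'))
    refine hnc (isCrossing_of_height_lt hpq ?_ (hz q).1)
    simp only [height_zero, (hz p).2, (hz q).2]
    omega
  ext k
  simpa using congrArg (fun e : Fin L ≃o Fin L => (e k : ℕ))
    (Subsingleton.elim (hσ.orderIsoOfSurjective σ σ.surjective) (OrderIso.refl _))

lemma isNonIntersecting_iff (hB : StrictAnti B) (hS : ⟨1, S⟩ ∈ pathSystems A B) :
    IsNonIntersecting A S ↔ ¬IsCrossing A S := by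
  rw [mem_pathSystems] at hS
  refine ⟨fun h ⟨x, pq, hpq⟩ => ?_, fun hnc p q hpq x hx => ?_⟩
  · simp only [meetPairs, mem_filter, mem_univ, true_and] at hpq
    exact (h _ _ hpq.1 x hpq.2.1).ne hpq.2.2
  · by_contra! hle
    obtain ⟨y, hy, heq⟩ := exists_height_eq_of_lt_of_le (N := x)
      (by simp only [height_zero, (hS p).2, (hS q).2, Equiv.Perm.one_apply]; have := hB hpq; omega)
      hle
    exact hnc ⟨y, (p, q), by simp [meetPairs, hpq, hy.trans hx, heq]⟩

open Classical in
lemma card_filter_not_isCrossing (hB : StrictAnti B) :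
    #{z ∈ pathSystems A B | ¬IsCrossing A z.2} = #(nonIntersecting A B) := by
  refine card_nbij' (fun z => z.2) (fun S => ⟨1, S⟩) (fun ⟨σ, S⟩ hz => ?_) (fun S hS => ?_)
    (fun z hz => ?_) (fun _ _ => rfl)
  · obtain ⟨hz, hnc⟩ := mem_filter.1 hz
    obtain rfl := eq_one_of_not_isCrossing hB hz hnc
    simp only [nonIntersecting, coe_filter, Set.mem_ofPred_eq, isNonIntersecting_iff hB hz]
    exact ⟨by simpa [pathSystems] using hz, hnc⟩
  · obtain ⟨hS, hni⟩ := mem_filter.1 hS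
    have hS' : (⟨1, S⟩ : Σ _ : Equiv.Perm (Fin L), Fin L → Finset ℕ) ∈ pathSystems A B := by
      simpa [pathSystems] using hS
    exact mem_filter.2 ⟨hS', (isNonIntersecting_iff hB hS').1 hni⟩
  · obtain ⟨hz, hnc⟩ := mem_filter.1 hz
    simp [← eq_one_of_not_isCrossing hB hz hnc]

/-- The Lindström–Gessel–Viennot lemma for lattice paths from `(0, -B j)` to `(A i, 0)`. -/
theorem det_choose_eq_card_nonIntersecting (hA : StrictAnti A) (hB : StrictAnti B) :
    (Matrix.of fun i j => ((A i).choose (B j) : ℤ)).det = #(nonIntersecting A B) := by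
  classical
  rw [det_choose_eq_sum_sign, ← sum_filter_add_sum_filter_not _ (fun z => IsCrossing A z.2),
    sum_sign_filter_isCrossing hA, zero_add, ← card_filter_not_isCrossing hB, card_eq_sum_ones,
    Nat.cast_sum]
  refine sum_congr rfl fun z hz => ?_
  obtain ⟨hz, hnc⟩ := mem_filter.1 hz
  simp [eq_one_of_not_isCrossing hB hz hnc]

end LatticePath

open LatticePath

section Tableaux

variable {n ℓ : ℕ} {l mu : ℕ → ℕ} {T : ℕ × ℕ → ℕ} {S : Fin ℓ → Finset ℕ} {r : ℕ}

structure IsSkewShape (n ℓ : ℕ) (l mu : ℕ → ℕ) : Prop where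
  antitone_l : ∀ i j, 1 ≤ i → i ≤ j → l j ≤ l i
  antitone_mu : ∀ i j, 1 ≤ i → i ≤ j → mu j ≤ mu i
  mu_le_l : ∀ i, 1 ≤ i → mu i ≤ l i
  length_le : ℓ ≤ n

def shiftedPart (n : ℕ) (l : ℕ → ℕ) (p : Fin ℓ) : ℕ := l (p.1 + 1) + n - (p.1 + 1)

lemma strictAnti_shiftedPart {f : ℕ → ℕ} (hf : ∀ i j, 1 ≤ i → i ≤ j → f j ≤ f i)
    (hn : ℓ ≤ n) : StrictAnti (shiftedPart n f : Fin ℓ → ℕ) := fun p q hpq => by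
  have hpq : p.1 < q.1 := hpq
  have := hf (p.1 + 1) (q.1 + 1) (by omega) (by omega)
  have := q.2
  simp only [shiftedPart]
  omega

lemma mem_skewCells (hl : ∀ i j, 1 ≤ i → i ≤ j → l j ≤ l i) {i j : ℕ} :
    (i, j) ∈ skewCells l mu ℓ ↔ 1 ≤ i ∧ i ≤ ℓ ∧ mu i < j ∧ j ≤ l i := by
  simp only [skewCells, mem_filter, mem_product, mem_Icc]
  constructor
  · rintro ⟨⟨⟨h1, h2⟩, -⟩, h3, h4⟩; exact ⟨h1, h2, h3, h4⟩
  · rintro ⟨h1, h2, h3, h4⟩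
    exact ⟨⟨⟨h1, h2⟩, by omega, h4.trans (hl 1 i le_rfl h1)⟩, h3, h4⟩

lemma exists_fin_succ_eq_of_mem_skewCells (hl : ∀ i j, 1 ≤ i → i ≤ j → l j ≤ l i) {i j : ℕ}
    (hc : (i, j) ∈ skewCells l mu ℓ) : ∃ p : Fin ℓ, i = p.1 + 1 := by
  have := (mem_skewCells hl).1 hc
  exact ⟨⟨i - 1, by omega⟩, by simp; omega⟩

def flatSteps (n : ℕ) (l mu : ℕ → ℕ) (T : ℕ × ℕ → ℕ) (r : ℕ) : Finset ℕ :=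
  (Ioc (mu r) (l r)).image fun j => n + j - r - 1 - T (r, j)

def tableauPaths (n ℓ : ℕ) (l mu : ℕ → ℕ) (T : ℕ × ℕ → ℕ) (p : Fin ℓ) : Finset ℕ :=
  range (l (p.1 + 1) + n - (p.1 + 1)) \ flatSteps n l mu T (p.1 + 1)

def pathFlats (n ℓ : ℕ) (l : ℕ → ℕ) (S : Fin ℓ → Finset ℕ) (r : ℕ) : Finset ℕ :=
  if h : r - 1 < ℓ then range (l r + n - r) \ S ⟨r - 1, h⟩ else ∅

noncomputable def pathsTableau (n ℓ : ℕ) (l mu : ℕ → ℕ) (S : Fin ℓ → Finset ℕ) (c : ℕ × ℕ) : ℕ :=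
  if c ∈ skewCells l mu ℓ then
    n + c.2 - c.1 - 1 - (pathFlats n ℓ l S c.1).nth (c.2 - mu c.1 - 1)
  else 0

lemma pathFlats_succ (S : Fin ℓ → Finset ℕ) (p : Fin ℓ) :
    pathFlats n ℓ l S (p.1 + 1) = range (l (p.1 + 1) + n - (p.1 + 1)) \ S p := by
  simp [pathFlats]

lemma pathsTableau_of_mem {c : ℕ × ℕ} (hc : c ∈ skewCells l mu ℓ) :
    pathsTableau n ℓ l mu S c =
      n + c.2 - c.1 - 1 - (pathFlats n ℓ l S c.1).nth (c.2 - mu c.1 - 1) :=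
  if_pos hc

lemma range_sdiff_pathFlats_succ
    (hS : S ∈ nonIntersecting (shiftedPart n l) (shiftedPart n mu)) (p : Fin ℓ) :
    range (l (p.1 + 1) + n - (p.1 + 1)) \ pathFlats n ℓ l S (p.1 + 1) = S p := by
  rw [pathFlats_succ]
  exact Finset.sdiff_sdiff_eq_self ((mem_nonIntersecting.1 hS).1 p).1

lemma strictMonoOn_flatStep (hl : ∀ i j, 1 ≤ i → i ≤ j → l j ≤ l i)
    (hT : T ∈ SSCTset n (skewCells l mu ℓ)) (hr : 1 ≤ r) (hrℓ : r ≤ ℓ) :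
    StrictMonoOn (fun j => n + j - r - 1 - T (r, j)) (Set.Ioc (mu r) (l r)) := by
  refine strictMonoOn_of_lt_add_one Set.ordConnected_Ioc fun j _ hj hj' => ?_
  simp only [Set.mem_Ioc] at hj hj'
  have hrow := hT.2.1 r j ((mem_skewCells hl).2 ⟨hr, hrℓ, hj.1, hj.2⟩)
    ((mem_skewCells hl).2 ⟨hr, hrℓ, by omega, hj'.2⟩)
  have hbound := hT.2.2.2 (r, j) ((mem_skewCells hl).2 ⟨hr, hrℓ, hj.1, hj.2⟩)
  simp only at hbound ⊢
  omega

lemma card_flatSteps (hl : ∀ i j, 1 ≤ i → i ≤ j → l j ≤ l i)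
    (hT : T ∈ SSCTset n (skewCells l mu ℓ)) (hr : 1 ≤ r) (hrℓ : r ≤ ℓ) :
    #(flatSteps n l mu T r) = l r - mu r := by
  rw [flatSteps, card_image_of_injOn (by simpa using (strictMonoOn_flatStep hl hT hr hrℓ).injOn),
    Nat.card_Ioc]

lemma nth_flatSteps (hl : ∀ i j, 1 ≤ i → i ≤ j → l j ≤ l i)
    (hT : T ∈ SSCTset n (skewCells l mu ℓ)) (hr : 1 ≤ r) (hrℓ : r ≤ ℓ) {j : ℕ}
    (hj : j ∈ Ioc (mu r) (l r)) :
    (flatSteps n l mu T r).nth (j - mu r - 1) = n + j - r - 1 - T (r, j) :=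
  nth_image_Ioc (strictMonoOn_flatStep hl hT hr hrℓ) hj

lemma flatSteps_subset_range (T : ℕ × ℕ → ℕ) (hrn : r ≤ n) :
    flatSteps n l mu T r ⊆ range (l r + n - r) := by
  intro d hd
  simp only [flatSteps, mem_image, mem_Ioc] at hd
  obtain ⟨j, hj, rfl⟩ := hd
  simp only [mem_range]
  omega

lemma height_flatSteps_lt (h : IsSkewShape n ℓ l mu)
    (hT : T ∈ SSCTset n (skewCells l mu ℓ)) (hr : 1 ≤ r) (hrℓ : r + 1 ≤ ℓ) :
    ∀ x ≤ l (r + 1) + n - (r + 1), height (range (l r + n - r) \ flatSteps n l mu T r) x <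
      height (range (l (r + 1) + n - (r + 1)) \ flatSteps n l mu T (r + 1)) x := by
  have hl := h.antitone_l r (r + 1) hr (by omega)
  have hmu := h.antitone_mu r (r + 1) hr (by omega)
  have hsub := h.mu_le_l r hr
  have hsub' := h.mu_le_l (r + 1) (by omega)
  have hn := h.length_le
  have hD := card_flatSteps h.antitone_l hT hr (by omega)
  have hE := card_flatSteps h.antitone_l hT (r := r + 1) (by omega) hrℓ
  refine (forall_height_lt_iff (c := mu r - mu (r + 1)) (flatSteps_subset_range T (by omega))
    (flatSteps_subset_range T (by omega)) (by omega) (by omega)).2 fun k hk => ⟨by omega, ?_⟩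
  have hj : mu r + 1 + k ∈ Ioc (mu r) (l r) := by simp; omega
  have hj' : mu r + 1 + k ∈ Ioc (mu (r + 1)) (l (r + 1)) := by simp; omega
  have hnth := nth_flatSteps h.antitone_l hT hr (by omega) hj
  have hnth' := nth_flatSteps h.antitone_l hT (by omega) hrℓ hj'
  rw [show mu r + 1 + k - mu r - 1 = k by omega] at hnth
  rw [show mu r + 1 + k - mu (r + 1) - 1 = k + (mu r - mu (r + 1)) by omega] at hnth'
  rw [hnth, hnth']
  have hcell := (mem_skewCells h.antitone_l (mu := mu) (ℓ := ℓ)).2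
    ⟨hr, (by omega : r ≤ ℓ), (mem_Ioc.1 hj).1, (mem_Ioc.1 hj).2⟩
  have hcell' := (mem_skewCells h.antitone_l (mu := mu) (ℓ := ℓ)).2
    ⟨(by omega : 1 ≤ r + 1), hrℓ, (mem_Ioc.1 hj').1, (mem_Ioc.1 hj').2⟩
  have hcol := hT.2.2.1 _ _ hcell hcell'
  have hbound := hT.2.2.2 _ hcell
  simp only at hbound
  omega

lemma tableauPaths_mem_nonIntersecting (h : IsSkewShape n ℓ l mu)
    (hT : T ∈ SSCTset n (skewCells l mu ℓ)) :
    tableauPaths n ℓ l mu T ∈ nonIntersecting (shiftedPart n l) (shiftedPart n mu) := by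
  have hn := h.length_le
  refine mem_nonIntersecting.2 ⟨fun p => ⟨sdiff_subset, ?_⟩, ?_⟩
  · have hpℓ := p.2
    have := h.mu_le_l (p.1 + 1) (by omega)
    rw [tableauPaths, card_sdiff_of_subset (flatSteps_subset_range T (by omega)), card_range,
      card_flatSteps h.antitone_l hT (by omega) (by omega), shiftedPart]
    omega
  · refine isNonIntersecting_of_succ (strictAnti_shiftedPart h.antitone_l hn) fun p q hq => ?_
    have hqℓ := q.2
    simp only [tableauPaths, shiftedPart, hq]
    exact height_flatSteps_lt h hT (by omega) (by omega)

lemma pathsTableau_tableauPaths (h : IsSkewShape n ℓ l mu)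
    (hT : T ∈ SSCTset n (skewCells l mu ℓ)) :
    pathsTableau n ℓ l mu (tableauPaths n ℓ l mu T) = T := by
  funext ⟨i, j⟩
  by_cases hc : (i, j) ∈ skewCells l mu ℓ
  · obtain ⟨p, rfl⟩ := exists_fin_succ_eq_of_mem_skewCells h.antitone_l hc
    have hcell := (mem_skewCells h.antitone_l).1 hc
    have hbound := hT.2.2.2 _ hc
    rw [pathsTableau_of_mem hc]
    simp only at hbound ⊢
    rw [pathFlats_succ, tableauPaths, Finset.sdiff_sdiff_eq_self
      (flatSteps_subset_range T (by have := h.length_le; omega)),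
      nth_flatSteps h.antitone_l hT (by omega) hcell.2.1 (by simp; omega)]
    omega
  · rw [pathsTableau, if_neg hc, hT.1 _ hc]

lemma card_pathFlats_succ (h : IsSkewShape n ℓ l mu)
    (hS : S ∈ nonIntersecting (shiftedPart n l) (shiftedPart n mu)) (p : Fin ℓ) :
    #(pathFlats n ℓ l S (p.1 + 1)) = l (p.1 + 1) - mu (p.1 + 1) := by
  obtain ⟨hsub, hcard⟩ := (mem_nonIntersecting.1 hS).1 p
  have := h.mu_le_l (p.1 + 1) (by omega)
  have := h.length_le
  simp only [shiftedPart] at hsub hcard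
  rw [pathFlats_succ, card_sdiff_of_subset hsub, card_range, hcard]
  omega

lemma nth_pathFlats_succ_le (h : IsSkewShape n ℓ l mu)
    (hS : S ∈ nonIntersecting (shiftedPart n l) (shiftedPart n mu)) (p : Fin ℓ) {j : ℕ}
    (hj : j ∈ Ioc (mu (p.1 + 1)) (l (p.1 + 1))) :
    (pathFlats n ℓ l S (p.1 + 1)).nth (j - mu (p.1 + 1) - 1) ≤ n + j - (p.1 + 1) - 1 := by
  have hcard := card_pathFlats_succ h hS p
  have := nth_add_card_le (s := pathFlats n ℓ l S (p.1 + 1)) (k := j - mu (p.1 + 1) - 1)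
    (by rw [pathFlats_succ]; exact sdiff_subset) (by rw [hcard]; simp at hj; omega)
  have := h.length_le
  have := p.2
  simp only [mem_Ioc] at hj
  omega

lemma nth_pathFlats_le_nth_pathFlats_succ (h : IsSkewShape n ℓ l mu)
    (hS : S ∈ nonIntersecting (shiftedPart n l) (shiftedPart n mu)) (p q : Fin ℓ)
    (hq : q.1 = p.1 + 1) {j : ℕ} (hj : mu (p.1 + 1) < j) (hj' : j ≤ l (q.1 + 1)) :
    (pathFlats n ℓ l S (p.1 + 1)).nth (j - mu (p.1 + 1) - 1) ≤
      (pathFlats n ℓ l S (q.1 + 1)).nth (j - mu (q.1 + 1) - 1) := by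
  have hni := (mem_nonIntersecting.1 hS).2
  have hD := card_pathFlats_succ h hS p
  have hE := card_pathFlats_succ h hS q
  have hl := h.antitone_l (p.1 + 1) (q.1 + 1) (by omega) (by omega)
  have hmu := h.antitone_mu (p.1 + 1) (q.1 + 1) (by omega) (by omega)
  have hsub' := h.mu_le_l (p.1 + 1) (by omega)
  have hn := h.length_le
  have hqℓ := q.2
  have hpaths := hni p q (Fin.lt_def.2 (by omega))
  simp only [shiftedPart] at hpaths
  rw [← range_sdiff_pathFlats_succ hS p, ← range_sdiff_pathFlats_succ hS q] at hpaths
  have hba : l (q.1 + 1) + n - (q.1 + 1) ≤ l (p.1 + 1) + n - (p.1 + 1) := by omega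
  have hc : l (p.1 + 1) + n - (p.1 + 1) - #(pathFlats n ℓ l S (p.1 + 1)) =
      l (q.1 + 1) + n - (q.1 + 1) - #(pathFlats n ℓ l S (q.1 + 1)) +
        (mu (p.1 + 1) - mu (q.1 + 1)) + 1 := by
    rw [hD, hE]; omega
  have hk : j - mu (p.1 + 1) - 1 + (mu (p.1 + 1) - mu (q.1 + 1)) <
      #(pathFlats n ℓ l S (q.1 + 1)) := by
    rw [hE]; omega
  have key := (forall_height_lt_iff (pathFlats_succ S p ▸ sdiff_subset)
    (pathFlats_succ S q ▸ sdiff_subset) hba hc).1 hpaths _ hk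
  rw [show j - mu (p.1 + 1) - 1 + (mu (p.1 + 1) - mu (q.1 + 1)) = j - mu (q.1 + 1) - 1 by omega]
    at key
  exact key.2

lemma pathsTableau_mem_SSCTset (h : IsSkewShape n ℓ l mu)
    (hS : S ∈ nonIntersecting (shiftedPart n l) (shiftedPart n mu)) :
    pathsTableau n ℓ l mu S ∈ SSCTset n (skewCells l mu ℓ) := by
  have hn := h.length_le
  refine ⟨fun c hc => if_neg hc, fun i j hc hc' => ?_, fun i j hc hc' => ?_, fun c hc => ?_⟩
  · obtain ⟨p, rfl⟩ := exists_fin_succ_eq_of_mem_skewCells h.antitone_l hc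
    rw [pathsTableau_of_mem hc, pathsTableau_of_mem hc']
    have hcell := (mem_skewCells h.antitone_l).1 hc
    have hcell' := (mem_skewCells h.antitone_l).1 hc'
    have hlt := nth_lt_nth (s := pathFlats n ℓ l S (p.1 + 1)) (k := j - mu (p.1 + 1) - 1)
      (k' := j + 1 - mu (p.1 + 1) - 1) (by omega) (by rw [card_pathFlats_succ h hS]; omega)
    have hle := nth_pathFlats_succ_le h hS p (j := j + 1) (by simp; omega)
    simp only
    omega
  · obtain ⟨p, rfl⟩ := exists_fin_succ_eq_of_mem_skewCells h.antitone_l hc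
    rw [pathsTableau_of_mem hc, pathsTableau_of_mem hc']
    have hcell := (mem_skewCells h.antitone_l).1 hc
    have hcell' := (mem_skewCells h.antitone_l).1 hc'
    let q : Fin ℓ := ⟨p.1 + 1, by omega⟩
    have hle := nth_pathFlats_le_nth_pathFlats_succ h hS p q rfl hcell.2.2.1 hcell'.2.2.2
    have hle' := nth_pathFlats_succ_le h hS q (j := j) (by simp [q]; omega)
    simp only [q] at hle hle' ⊢
    omega
  · obtain ⟨i, j⟩ := c
    have hcell := (mem_skewCells h.antitone_l).1 hc
    rw [pathsTableau_of_mem hc]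
    simp only
    omega

lemma flatSteps_pathsTableau (h : IsSkewShape n ℓ l mu)
    (hS : S ∈ nonIntersecting (shiftedPart n l) (shiftedPart n mu)) (p : Fin ℓ) :
    flatSteps n l mu (pathsTableau n ℓ l mu S) (p.1 + 1) = pathFlats n ℓ l S (p.1 + 1) := by
  have hn := h.length_le
  have hpℓ := p.2
  ext d
  simp only [flatSteps, mem_image]
  constructor
  · rintro ⟨j, hj, rfl⟩
    have hcell : (p.1 + 1, j) ∈ skewCells l mu ℓ :=
      (mem_skewCells h.antitone_l).2 ⟨by omega, by omega, (mem_Ioc.1 hj).1, (mem_Ioc.1 hj).2⟩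
    have hle := nth_pathFlats_succ_le h hS p hj
    rw [pathsTableau_of_mem hcell]
    simp only [mem_Ioc] at hj
    rw [show n + j - (p.1 + 1) - 1 - (n + j - (p.1 + 1) - 1 -
      (pathFlats n ℓ l S (p.1 + 1)).nth (j - mu (p.1 + 1) - 1)) =
        (pathFlats n ℓ l S (p.1 + 1)).nth (j - mu (p.1 + 1) - 1) by omega]
    exact nth_mem (by rw [card_pathFlats_succ h hS]; omega)
  · intro hd
    obtain ⟨k, hk, rfl⟩ := exists_nth_eq hd
    rw [card_pathFlats_succ h hS] at hk
    have hj : mu (p.1 + 1) + 1 + k ∈ Ioc (mu (p.1 + 1)) (l (p.1 + 1)) := by simp; omega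
    have hcell : (p.1 + 1, mu (p.1 + 1) + 1 + k) ∈ skewCells l mu ℓ :=
      (mem_skewCells h.antitone_l).2 ⟨by omega, by omega, (mem_Ioc.1 hj).1, (mem_Ioc.1 hj).2⟩
    have hle := nth_pathFlats_succ_le h hS p hj
    refine ⟨_, hj, ?_⟩
    rw [pathsTableau_of_mem hcell]
    simp only [show mu (p.1 + 1) + 1 + k - mu (p.1 + 1) - 1 = k by omega] at hle ⊢
    omega

lemma tableauPaths_pathsTableau (h : IsSkewShape n ℓ l mu)
    (hS : S ∈ nonIntersecting (shiftedPart n l) (shiftedPart n mu)) :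
    tableauPaths n ℓ l mu (pathsTableau n ℓ l mu S) = S := by
  funext p
  rw [tableauPaths, flatSteps_pathsTableau h hS, range_sdiff_pathFlats_succ hS]

theorem card_SSCTset_eq_card_nonIntersecting (h : IsSkewShape n ℓ l mu) :
    Nat.card (SSCTset n (skewCells l mu ℓ)) =
      #(nonIntersecting (shiftedPart n l : Fin ℓ → ℕ) (shiftedPart n mu)) := by
  have hbij : Set.BijOn (tableauPaths n ℓ l mu) (SSCTset n (skewCells l mu ℓ))
      (nonIntersecting (shiftedPart n l : Fin ℓ → ℕ) (shiftedPart n mu) : Set _) :=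
    Set.InvOn.bijOn (f' := pathsTableau n ℓ l mu)
      ⟨fun _ hT => pathsTableau_tableauPaths h hT, fun _ hS => tableauPaths_pathsTableau h hS⟩
      (fun _ hT => tableauPaths_mem_nonIntersecting h hT)
      (fun _ hS => pathsTableau_mem_SSCTset h hS)
  rw [Nat.card_coe_set_eq, hbij.ncard_eq, Set.ncard_coe_finset]

end Tableaux

theorem ssct_count_eq_det_general (n ℓ : ℕ) (l mu : ℕ → ℕ)
    (hl : ∀ i j, 1 ≤ i → i ≤ j → l j ≤ l i)
    (hmu : ∀ i j, 1 ≤ i → i ≤ j → mu j ≤ mu i)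
    (hsub : ∀ i, 1 ≤ i → mu i ≤ l i)
    (hn : ℓ ≤ n) :
    (Nat.card (SSCTset n (skewCells l mu ℓ)) : ℤ) =
      Matrix.det (Matrix.of fun i j : Fin ℓ =>
        ((l (i.1 + 1) + n - (i.1 + 1)).choose (mu (j.1 + 1) + n - (j.1 + 1)) : ℤ)) := by
  rw [card_SSCTset_eq_card_nonIntersecting ⟨hl, hmu, hsub, hn⟩]
  exact (det_choose_eq_card_nonIntersecting (strictAnti_shiftedPart hl hn)
    (strictAnti_shiftedPart hmu hn)).symm

/-- **Proposition (first equality).** `|SSCT_n(λ/μ)| = det(binom(λ_i+n-i, μ_j+n-j))_{1≤i,j≤ℓ}`. -/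
theorem ssct_count_eq_det (n ℓ : ℕ) (l mu : ℕ → ℕ)
    (hl : ∀ i j, 1 ≤ i → i ≤ j → l j ≤ l i)
    (hl0 : ∀ i, ℓ < i → l i = 0)
    (hlpos : ∀ i, 1 ≤ i → i ≤ ℓ → 0 < l i)
    (hmu : ∀ i j, 1 ≤ i → i ≤ j → mu j ≤ mu i)
    (hsub : ∀ i, 1 ≤ i → mu i ≤ l i)
    (hn : ℓ ≤ n) :
    (Nat.card (SSCTset n (skewCells l mu ℓ)) : ℤ) =
      Matrix.det (Matrix.of fun i j : Fin ℓ =>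
        ((l (i.1 + 1) + n - (i.1 + 1)).choose (mu (j.1 + 1) + n - (j.1 + 1)) : ℤ)) :=
  ssct_count_eq_det_general n ℓ l mu hl hmu hsub hn
end

section
/- (Jacobi–Trudi identity for lecture hall tableaux.) Let n, m be nonnegative integers and let μ ⊆ λ be partitions with ℓ = ℓ(λ) ≤ n. Then, as polynomials in x_0,…,x_{m−1}, L^n_{λ/μ}(x_0,…,x_{m−1}) = det( L^{μ_j+n−j+1}_{(λ_i−μ_j−i+j)}(x_0,…,x_{m−1}) )_{1 ≤ i,j ≤ ℓ}, where for a one-row shape (k) one sets L^N_{(k)} = 1 if k = 0 and L^N_{(k)} = 0 if k < 0. -/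
open Finset MvPolynomial

/-!
Read a lecture hall tableau along contents `d = j - i`: row `i` becomes the sequence of ratios
`L(i,j) / (n + d)` over `μ_i - i < d ≤ λ_i - i`, a *strand*, padded before its first content by a
value above every entry and after its last content by a value below every entry. The row
conditions say that a strand is weakly decreasing, the column conditions that strand `i + 1` at
content `d - 1` stays strictly below strand `i` at content `d`, i.e. that consecutive strands never
touch. The one-row tableaux counted by the matrix entry `(i, j)` are exactly the strands from
`μ_j - j` to `λ_i - i`, so expanding the determinant gives a signed sum over families of strands
with permuted endpoints. As in the Lindström–Gessel–Viennot lemma, exchanging the tails of the two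
strands at the first touching point is a weight-preserving, sign-reversing involution on the
families that touch; the surviving families have the identity permutation and are the tableaux of
shape `λ/μ`.
-/

namespace LectureHall

lemma prod_Ioc_consecutive_int {M : Type*} [CommMonoid M] (f : ℤ → M) {a b c : ℤ}
    (hab : a ≤ b) (hbc : b ≤ c) :
    (∏ d ∈ Finset.Ioc a b, f d) * ∏ d ∈ Finset.Ioc b c, f d =
      ∏ d ∈ Finset.Ioc a c, f d := by
  rw [← Finset.Ioc_union_Ioc_eq_Ioc hab hbc,
    Finset.prod_union (Finset.Ioc_disjoint_Ioc_of_le le_rfl)]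

lemma prod_eq_prod_of_pair {ι M : Type*} [Fintype ι] [DecidableEq ι] [CommMonoid M]
    {f g : ι → M} {a b : ι} (hab : a ≠ b) (hpair : f a * f b = g a * g b)
    (h : ∀ i, i ≠ a → i ≠ b → f i = g i) : ∏ i, f i = ∏ i, g i := by
  rw [← Finset.prod_mul_prod_compl {a, b}, ← Finset.prod_mul_prod_compl (f := g) {a, b},
    Finset.prod_pair hab, Finset.prod_pair hab, hpair]
  congr 1
  exact Finset.prod_congr rfl fun i hi => h i (by simp_all) (by simp_all)

section Strand

variable {n m : ℕ} {A B A' B' D d : ℤ} {F G : ℤ → ℚ} {v v' : ℤ → ℕ}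

/-- `headVal m A` and `tailVal B` pad a strand before its source `A` and after its sink `B`. They
lie above (resp. below) every entry and increase strictly with the endpoint, so two strands can
only touch in their padding if their endpoints are out of order. -/
def headVal (m : ℕ) (A : ℤ) : ℚ := m + 2 ^ A

def tailVal (B : ℤ) : ℚ := -2 ^ (-B)

lemma headVal_strictMono (m : ℕ) : StrictMono (headVal m) := fun _ _ h => by
  have := zpow_lt_zpow_right₀ (one_lt_two : (1 : ℚ) < 2) h
  unfold headVal; linarith

lemma tailVal_strictMono : StrictMono tailVal := fun _ _ h => by
  have := zpow_lt_zpow_right₀ (one_lt_two : (1 : ℚ) < 2) (neg_lt_neg h)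
  unfold tailVal; linarith

lemma natCast_lt_headVal (m : ℕ) (A : ℤ) : (m : ℚ) < headVal m A := by
  have : (0 : ℚ) < 2 ^ A := zpow_pos two_pos A
  unfold headVal; linarith

lemma tailVal_neg (B : ℤ) : tailVal B < 0 := by
  have : (0 : ℚ) < 2 ^ (-B) := zpow_pos two_pos (-B)
  unfold tailVal; linarith

/-- The lecture hall denominator `n + j - i` of a cell of content `d = j - i`. -/
def den (n : ℕ) (d : ℤ) : ℕ := (n + d).toNat

lemma den_pos (hA : -(n : ℤ) ≤ A) (hd : A < d) : 0 < den n d := by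
  unfold den; omega

structure IsStrand (n m : ℕ) (A B : ℤ) (F : ℤ → ℚ) : Prop where
  neg_le_source : -(n : ℤ) ≤ A
  source_le_sink : A ≤ B
  eq_headVal : ∀ d ≤ A, F d = headVal m A
  eq_tailVal : ∀ d, B < d → F d = tailVal B
  exists_eq_div : ∀ d, A < d → d ≤ B → ∃ w : ℕ, F d = w / den n d
  lt : ∀ d, A < d → d ≤ B → F d < m
  antitone : Antitone F

namespace IsStrand

lemma nonneg (hF : IsStrand n m A B F) (hd : d ≤ B) : 0 ≤ F d := by
  rcases le_or_gt d A with h | h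
  · rw [hF.eq_headVal d h]
    exact (Nat.cast_nonneg m).trans (natCast_lt_headVal m A).le
  · obtain ⟨w, hw⟩ := hF.exists_eq_div d h hd
    rw [hw]; positivity

lemma le_headVal (hF : IsStrand n m A B F) (d : ℤ) : F d ≤ headVal m A :=
  hF.eq_headVal _ (min_le_right d A) ▸ hF.antitone (min_le_left d A)

lemma eq_of_eqOn (hF : IsStrand n m A B F) (hG : IsStrand n m A B G)
    (h : Set.EqOn F G (Set.Ioc A B)) : F = G := by
  funext d
  rcases le_or_gt d A with h1 | h1
  · rw [hF.eq_headVal d h1, hG.eq_headVal d h1]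
  rcases le_or_gt d B with h2 | h2
  · exact h ⟨h1, h2⟩
  · rw [hF.eq_tailVal d h2, hG.eq_tailVal d h2]

end IsStrand

theorem finite_setOf_isStrand (n m : ℕ) (A B : ℤ) : {F | IsStrand n m A B F}.Finite := by
  refine Set.Finite.of_finite_image (f := fun F (d : Finset.Ioc A B) => F d) ?_
    fun F hF G hG h => IsStrand.eq_of_eqOn hF hG fun d hd =>
      congrFun h ⟨d, Finset.mem_Ioc.2 hd⟩
  refine (Set.Finite.pi (t := fun d : Finset.Ioc A B =>
    (fun w : ℕ => (w : ℚ) / den n d) '' Set.Iio (m * den n d))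
    fun _ => (Set.finite_Iio _).image _).subset ?_
  rintro _ ⟨F, hF, rfl⟩ ⟨d, hd⟩ -
  obtain ⟨h1, h2⟩ := Finset.mem_Ioc.1 hd
  obtain ⟨w, hw⟩ := hF.exists_eq_div d h1 h2
  have hden : (0 : ℚ) < den n d := Nat.cast_pos.2 (den_pos hF.neg_le_source h1)
  have hlt := hF.lt d h1 h2
  rw [hw, div_lt_iff₀ hden] at hlt
  exact ⟨w, by exact_mod_cast hlt, hw.symm⟩

noncomputable def strandFinset (n m : ℕ) (A B : ℤ) : Finset (ℤ → ℚ) :=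
  (finite_setOf_isStrand n m A B).toFinset

@[simp]
lemma mem_strandFinset : F ∈ strandFinset n m A B ↔ IsStrand n m A B F :=
  Set.Finite.mem_toFinset _

def strandOf (n m : ℕ) (A B : ℤ) (v : ℤ → ℕ) (d : ℤ) : ℚ :=
  if d ≤ A then headVal m A else if d ≤ B then (v d : ℚ) / den n d else tailVal B

def strandEntry (n : ℕ) (F : ℤ → ℚ) (d : ℤ) : ℕ := ⌊F d * den n d⌋₊

lemma strandOf_of_mem (hA : A < d) (hB : d ≤ B) : strandOf n m A B v d = v d / den n d := by
  rw [strandOf, if_neg (not_le.2 hA), if_pos hB]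

lemma strandOf_congr (h : Set.EqOn v v' (Set.Ioc A B)) :
    strandOf n m A B v = strandOf n m A B v' := by
  funext d
  unfold strandOf
  split_ifs with h1 h2
  · rfl
  · rw [h ⟨not_le.1 h1, h2⟩]
  · rfl

lemma strandEntry_strandOf (hn : -(n : ℤ) ≤ A) (hA : A < d) (hB : d ≤ B) :
    strandEntry n (strandOf n m A B v) d = v d := by
  have hden : (den n d : ℚ) ≠ 0 := Nat.cast_ne_zero.2 (den_pos hn hA).ne'
  rw [strandEntry, strandOf_of_mem hA hB, div_mul_cancel₀ _ hden, Nat.floor_natCast]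

lemma floor_strandOf (hA : A < d) (hB : d ≤ B) :
    ⌊strandOf n m A B v d⌋₊ = v d / den n d := by
  rw [strandOf_of_mem hA hB, Nat.floor_div_eq_div]

lemma IsStrand.strandOf_strandEntry (hF : IsStrand n m A B F) :
    strandOf n m A B (strandEntry n F) = F := by
  funext d
  unfold strandOf
  split_ifs with h1 h2
  · exact (hF.eq_headVal d h1).symm
  · obtain ⟨w, hw⟩ := hF.exists_eq_div d (not_le.1 h1) h2
    have hden : (den n d : ℚ) ≠ 0 :=
      Nat.cast_ne_zero.2 (den_pos hF.neg_le_source (not_le.1 h1)).ne'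
    rw [strandEntry, hw, div_mul_cancel₀ _ hden, Nat.floor_natCast]
  · exact (hF.eq_tailVal d (not_le.1 h2)).symm

def IsLectureHallRow (n m : ℕ) (A B : ℤ) (v : ℤ → ℕ) : Prop :=
  (∀ d, A < d → d < B → v (d + 1) * den n d ≤ v d * den n (d + 1)) ∧
    ∀ d, A < d → d ≤ B → v d / den n d < m

theorem isStrand_strandOf_iff (hn : -(n : ℤ) ≤ A) (hAB : A ≤ B) :
    IsStrand n m A B (strandOf n m A B v) ↔ IsLectureHallRow n m A B v := by
  have hden : ∀ d, A < d → (0 : ℚ) < den n d := fun d hd => Nat.cast_pos.2 (den_pos hn hd)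
  have hlt : ∀ d, A < d → d ≤ B → (strandOf n m A B v d < m ↔ v d / den n d < m) :=
    fun d h1 h2 => by
      rw [strandOf_of_mem h1 h2, div_lt_iff₀ (hden d h1), Nat.div_lt_iff_lt_mul (den_pos hn h1)]
      exact_mod_cast Iff.rfl
  have hstep : ∀ d, A < d → d < B →
      (strandOf n m A B v (d + 1) ≤ strandOf n m A B v d ↔
        v (d + 1) * den n d ≤ v d * den n (d + 1)) := fun d h1 h2 => by
    rw [strandOf_of_mem (by omega) (by omega), strandOf_of_mem h1 h2.le,
      div_le_div_iff₀ (hden _ (by omega)) (hden d h1)]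
    exact_mod_cast Iff.rfl
  constructor
  · intro hF
    exact ⟨fun d h1 h2 => (hstep d h1 h2).1 (hF.antitone (by omega)),
      fun d h1 h2 => (hlt d h1 h2).1 (hF.lt d h1 h2)⟩
  rintro ⟨hrow, hbound⟩
  have hval : ∀ d, A < d → d ≤ B → (v d : ℚ) / den n d < m := fun d h1 h2 => by
    simpa only [strandOf_of_mem h1 h2] using (hlt d h1 h2).2 (hbound d h1 h2)
  refine ⟨hn, hAB, fun d hd => if_pos hd, fun d hd => ?_,
    fun d h1 h2 => ⟨v d, strandOf_of_mem h1 h2⟩, fun d h1 h2 => (hlt d h1 h2).2 (hbound d h1 h2),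
    antitone_int_of_succ_le fun d => ?_⟩
  · rw [strandOf, if_neg (by omega), if_neg (by omega)]
  by_cases hint : A < d ∧ d < B
  · exact (hstep d hint.1 hint.2).2 (hrow d hint.1 hint.2)
  have hhead := natCast_lt_headVal m A
  have htail := tailVal_neg B
  have hm : (0 : ℚ) ≤ m := Nat.cast_nonneg m
  unfold strandOf
  -- in the remaining cases at least one side is padding
  split_ifs <;> first
    | exact le_rfl
    | (exfalso; omega)
    | linarith [hval (d + 1) (by omega) (by omega)]
    | linarith [show (0 : ℚ) ≤ v d / den n d by positivity]

end Strand

section TwoStrands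

variable {n m : ℕ} {A B A' B' D : ℤ} {F G : ℤ → ℚ}

noncomputable def strandWeight {M : Type*} [CommMonoid M] (x : ℕ → M) (A B : ℤ) (F : ℤ → ℚ) :
    M :=
  ∏ d ∈ Finset.Ioc A B, x ⌊F d⌋₊

def splice (D : ℤ) (F G : ℤ → ℚ) (d : ℤ) : ℚ := if d < D then F d else G d

namespace IsStrand

lemma source_lt_of_le (hF : IsStrand n m A B F) (hG : IsStrand n m A' B' G) (hA : A' < A)
    (h : F D ≤ G (D - 1)) : A < D := by
  by_contra! hD
  rw [hF.eq_headVal D hD] at h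
  exact (h.trans (hG.le_headVal _)).not_gt (headVal_strictMono m hA)

/-- At a first touching point neither strand is in its tail padding yet, so the tails can be
exchanged there. -/
lemma le_sink_add_one_of_le (hF : IsStrand n m A B F) (hG : IsStrand n m A' B' G)
    (h : F D ≤ G (D - 1)) (hprev : G (D - 2) < F (D - 1)) : D ≤ B + 1 ∧ D ≤ B' + 1 := by
  have hG₁ : G (D - 1) ≤ G (D - 2) := hG.antitone (by omega)
  have hB : D ≤ B + 1 := by
    by_contra! hD
    have : F (D - 1) = F D := by rw [hF.eq_tailVal _ (by omega), hF.eq_tailVal _ (by omega)]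
    linarith
  refine ⟨hB, ?_⟩
  by_contra! hD
  have hGtail : G (D - 1) = tailVal B' := hG.eq_tailVal _ (by omega)
  have hFD : B < D := by
    by_contra! hD'
    linarith [hF.nonneg hD', tailVal_neg B']
  rw [hF.eq_tailVal _ hFD, hGtail] at h
  have := tailVal_strictMono.le_iff_le.1 h
  omega

lemma splice (hF : IsStrand n m A B F) (hG : IsStrand n m A' B' G) (hA : A < D) (hA' : A' < D)
    (hB : D ≤ B + 1) (hB' : D ≤ B' + 1) (hjoin : G D ≤ F (D - 1)) :
    IsStrand n m A B' (LectureHall.splice D F G) := by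
  refine ⟨hF.neg_le_source, by omega, fun d hd => ?_, fun d hd => ?_, fun d h1 h2 => ?_,
    fun d h1 h2 => ?_, antitone_int_of_succ_le fun d => ?_⟩ <;> unfold LectureHall.splice
  · rw [if_pos (by omega), hF.eq_headVal d hd]
  · rw [if_neg (by omega), hG.eq_tailVal d hd]
  · split_ifs with h
    · exact hF.exists_eq_div d h1 (by omega)
    · exact hG.exists_eq_div d (by omega) h2
  · split_ifs with h
    · exact hF.lt d h1 (by omega)
    · exact hG.lt d (by omega) h2
  · split_ifs with h h'
    · exact hF.antitone (by omega)
    · exact absurd h (by omega)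
    · rw [show d = D - 1 by omega, sub_add_cancel]; exact hjoin
    · exact hG.antitone (by omega)

end IsStrand

lemma strandWeight_splice_mul {M : Type*} [CommMonoid M] (x : ℕ → M) (hA : A < D) (hA' : A' < D)
    (hB : D ≤ B + 1) (hB' : D ≤ B' + 1) :
    strandWeight x A B' (splice D F G) * strandWeight x A' B (splice D G F) =
      strandWeight x A B F * strandWeight x A' B' G := by
  have hlow : ∀ {A₀} (H K : ℤ → ℚ), ∏ d ∈ Finset.Ioc A₀ (D - 1), x ⌊splice D H K d⌋₊ =
      ∏ d ∈ Finset.Ioc A₀ (D - 1), x ⌊H d⌋₊ := fun H K =>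
    Finset.prod_congr rfl fun d hd => by rw [splice, if_pos (by simp at hd; omega)]
  have hhigh : ∀ {B₀} (H K : ℤ → ℚ), ∏ d ∈ Finset.Ioc (D - 1) B₀, x ⌊splice D H K d⌋₊ =
      ∏ d ∈ Finset.Ioc (D - 1) B₀, x ⌊K d⌋₊ := fun H K =>
    Finset.prod_congr rfl fun d hd => by rw [splice, if_neg (by simp at hd; omega)]
  simp only [strandWeight]
  rw [← prod_Ioc_consecutive_int _ (b := D - 1) (by omega) (by omega),
    ← prod_Ioc_consecutive_int _ (a := A') (b := D - 1) (by omega) (by omega),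
    ← prod_Ioc_consecutive_int _ (a := A) (b := D - 1) (c := B) (by omega) (by omega),
    ← prod_Ioc_consecutive_int _ (a := A') (b := D - 1) (c := B') (by omega) (by omega),
    hlow, hhigh, hlow, hhigh]
  ac_rfl

lemma IsStrand.lt_of_interior (hF : IsStrand n m A B F) (hG : IsStrand n m A' B' G)
    (hA : A' < A) (hB : B' < B) (h : ∀ d, A < d → d ≤ B → d - 1 ≤ B' → G (d - 1) < F d)
    (d : ℤ) : G (d - 1) < F d := by
  rcases le_or_gt d A with h1 | h1
  · rw [hF.eq_headVal d h1]
    exact (hG.le_headVal _).trans_lt (headVal_strictMono m hA)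
  rcases le_or_gt d B with h2 | h2
  · rcases le_or_gt (d - 1) B' with h3 | h3
    · exact h d h1 h2 h3
    · rw [hG.eq_tailVal _ h3]
      exact (tailVal_neg B').trans_le (hF.nonneg h2)
  · rw [hF.eq_tailVal d h2, hG.eq_tailVal _ (by omega)]
    exact tailVal_strictMono hB

end TwoStrands

section Families

variable {ℓ n m : ℕ} {A B : Fin ℓ → ℤ} {σ : Equiv.Perm (Fin ℓ)}
  {t : Fin ℓ → ℤ → ℚ} {D d : ℤ} {a b i : Fin ℓ}

/-- Strand `b`, the one right below strand `a`, reaches strand `a` at content `d`. -/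
structure Crossing (t : Fin ℓ → ℤ → ℚ) (d : ℤ) (a b : Fin ℓ) : Prop where
  succ_eq : a.1 + 1 = b.1
  le : t a d ≤ t b (d - 1)

lemma Crossing.lt (h : Crossing t d a b) : a < b := Fin.lt_def.2 (by have := h.succ_eq; omega)

def HasCrossing (t : Fin ℓ → ℤ → ℚ) : Prop := ∃ d a b, Crossing t d a b

/-- The first crossing: least content, then least row. -/
structure IsSwapSite (t : Fin ℓ → ℤ → ℚ) (D : ℤ) (a b : Fin ℓ) : Prop where
  isLeast_content : IsLeast {d | ∃ a b, Crossing t d a b} D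
  isLeast_row : IsLeast {a | ∃ b, Crossing t D a b} a
  crossing : Crossing t D a b

def swapTails (t : Fin ℓ → ℤ → ℚ) (D : ℤ) (a b : Fin ℓ) (i : Fin ℓ) : ℤ → ℚ :=
  splice D (t i) (t (Equiv.swap a b i))

lemma IsSwapSite.unique {D' : ℤ} {a' b' : Fin ℓ} (h : IsSwapSite t D a b)
    (h' : IsSwapSite t D' a' b') : D = D' ∧ a = a' ∧ b = b' := by
  obtain rfl := h.isLeast_content.unique h'.isLeast_content
  obtain rfl := h.isLeast_row.unique h'.isLeast_row
  exact ⟨rfl, rfl, Fin.ext (h.crossing.succ_eq.symm.trans h'.crossing.succ_eq)⟩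

lemma IsSwapSite.sub_two_lt (h : IsSwapSite t D a b) : t b (D - 2) < t a (D - 1) := by
  by_contra! hle
  have := h.isLeast_content.2
    ⟨a, b, h.crossing.succ_eq, by rwa [show D - 1 - 1 = D - 2 by ring]⟩
  omega

lemma swapTails_of_lt (hd : d < D) (i : Fin ℓ) : swapTails t D a b i d = t i d := if_pos hd

lemma swapTails_of_ne (hia : i ≠ a) (hib : i ≠ b) : swapTails t D a b i = t i := by
  funext d
  simp [swapTails, splice, Equiv.swap_apply_of_ne_of_ne hia hib]

lemma swapTails_swapTails : swapTails (swapTails t D a b) D a b = t := by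
  funext i d
  simp only [swapTails, splice]
  split_ifs <;> simp

lemma IsSwapSite.isSwapSite_swapTails (h : IsSwapSite t D a b) (hb : Antitone (t b)) :
    IsSwapSite (swapTails t D a b) D a b := by
  obtain ⟨⟨-, hDmin⟩, ⟨-, hamin⟩, hab, hcross⟩ := h
  have hlow : ∀ i, ∀ d < D, swapTails t D a b i d = t i d :=
    fun i d hd => swapTails_of_lt hd i
  have hnew : Crossing (swapTails t D a b) D a b := by
    refine ⟨hab, ?_⟩
    rw [hlow b (D - 1) (by omega), swapTails, splice, if_neg (lt_irrefl D), Equiv.swap_apply_left]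
    exact hb (by omega)
  refine ⟨⟨⟨a, b, hnew⟩, ?_⟩, ⟨⟨b, hnew⟩, ?_⟩, hnew⟩
  · rintro d ⟨a', b', hab', hle⟩
    by_contra! hd
    rw [hlow _ _ hd, hlow _ (d - 1) (by omega)] at hle
    exact absurd (hDmin ⟨a', b', hab', hle⟩) (not_le.2 hd)
  · rintro a' ⟨b', hab', hle⟩
    by_cases ha' : a' = a
    · exact ha'.ge
    by_cases hb' : a' = b
    · rw [hb']; exact (Crossing.lt ⟨hab, hcross⟩).le
    rw [swapTails_of_ne ha' hb', hlow _ (D - 1) (by omega)] at hle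
    exact hamin ⟨b', hab', hle⟩

variable (n m A B) in
noncomputable def strandFamilies :
    Finset ((_ : Equiv.Perm (Fin ℓ)) × (Fin ℓ → ℤ → ℚ)) :=
  Finset.univ.sigma fun σ => Fintype.piFinset fun i => strandFinset n m (A i) (B (σ i))

lemma mem_strandFamilies {p : (_ : Equiv.Perm (Fin ℓ)) × (Fin ℓ → ℤ → ℚ)} :
    p ∈ strandFamilies n m A B ↔ ∀ i, IsStrand n m (A i) (B (p.1 i)) (p.2 i) := by
  simp [strandFamilies]

lemma exists_isSwapSite (hA : StrictAnti A) (ht : ∀ i, IsStrand n m (A i) (B (σ i)) (t i))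
    (h : HasCrossing t) : ∃ D a b, IsSwapSite t D a b := by
  have hsrc : ∀ {d a b}, Crossing t d a b → A a < d := fun {_ a b} hc =>
    (ht a).source_lt_of_le (ht b) (hA hc.lt) hc.le
  obtain ⟨D, hD, hDmin⟩ := Int.exists_least_of_bdd
    ⟨-(n : ℤ), fun d ⟨a, _, hc⟩ => ((ht a).neg_le_source.trans (hsrc hc).le)⟩ h
  classical
  set S := Finset.univ.filter fun a => ∃ b, Crossing t D a b
  have hS : S.Nonempty := by
    obtain ⟨a, b, hc⟩ := hD
    exact ⟨a, by simpa [S] using ⟨b, hc⟩⟩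
  obtain ⟨b, hc⟩ := (Finset.mem_filter.1 (S.min'_mem hS)).2
  exact ⟨D, _, b, ⟨hD, fun d hd => hDmin d hd⟩, by simpa [S] using S.isLeast_min' hS, hc⟩

section SwapSite

variable (hA : StrictAnti A) (ht : ∀ i, IsStrand n m (A i) (B (σ i)) (t i))
  (hs : IsSwapSite t D a b)
include hA ht hs

lemma IsSwapSite.bounds : A b < A a ∧ A a < D ∧ D ≤ B (σ a) + 1 ∧ D ≤ B (σ b) + 1 := by
  have hAab : A b < A a := hA hs.crossing.lt
  exact ⟨hAab, (ht a).source_lt_of_le (ht b) hAab hs.crossing.le,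
    (ht a).le_sink_add_one_of_le (ht b) hs.crossing.le hs.sub_two_lt⟩

lemma IsSwapSite.isStrand_swapTails (i : Fin ℓ) :
    IsStrand n m (A i) (B ((σ * Equiv.swap a b) i)) (swapTails t D a b i) := by
  obtain ⟨hAab, haD, hBa, hBb⟩ := hs.bounds hA ht
  have hjoin : t b D ≤ t a (D - 1) :=
    ((ht b).antitone (by omega : D - 1 ≤ D)).trans
      (((ht b).antitone (by omega : D - 2 ≤ D - 1)).trans hs.sub_two_lt.le)
  rcases eq_or_ne i a with rfl | hia
  · simpa [swapTails] using (ht i).splice (ht b) haD (by omega) hBa hBb hjoin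
  rcases eq_or_ne i b with rfl | hib
  · simpa [swapTails] using (ht i).splice (ht a) (by omega) haD hBb hBa hs.crossing.le
  simpa [swapTails_of_ne hia hib, Equiv.swap_apply_of_ne_of_ne hia hib] using ht i

lemma IsSwapSite.prod_strandWeight_swapTails {M : Type*} [CommMonoid M] (x : ℕ → M) :
    ∏ i, strandWeight x (A i) (B ((σ * Equiv.swap a b) i)) (swapTails t D a b i) =
      ∏ i, strandWeight x (A i) (B (σ i)) (t i) := by
  obtain ⟨hAab, haD, hBa, hBb⟩ := hs.bounds hA ht
  have hab : a ≠ b := hs.crossing.lt.ne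
  refine prod_eq_prod_of_pair hab ?_ fun i hia hib => ?_
  · simpa [swapTails, hab.symm] using
      strandWeight_splice_mul x haD (by omega) hBa hBb (F := t a) (G := t b)
  · rw [swapTails_of_ne hia hib, Equiv.Perm.mul_apply, Equiv.swap_apply_of_ne_of_ne hia hib]

end SwapSite

open Classical in
variable (n m A B) in
noncomputable def nonCrossingFamilies : Finset (Fin ℓ → ℤ → ℚ) :=
  (Fintype.piFinset fun i => strandFinset n m (A i) (B i)).filter (¬ HasCrossing ·)

lemma mem_nonCrossingFamilies :
    t ∈ nonCrossingFamilies n m A B ↔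
      (∀ i, IsStrand n m (A i) (B i) (t i)) ∧ ¬ HasCrossing t := by
  simp [nonCrossingFamilies]

lemma eq_one_of_not_hasCrossing (hB : StrictAnti B)
    (ht : ∀ i, IsStrand n m (A i) (B (σ i)) (t i)) (h : ¬ HasCrossing t) : σ = 1 := by
  have hsucc : ∀ a b : Fin ℓ, a.1 + 1 = b.1 → σ a < σ b := fun a b hab => by
    refine hB.lt_iff_gt.1 (not_le.1 fun hle => h ⟨B (σ b) + 1, a, b, hab, ?_⟩)
    rw [(ht a).eq_tailVal _ (by omega), add_sub_cancel_right]
    exact (tailVal_neg _).le.trans ((ht b).nonneg le_rfl)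
  rw [← Equiv.Perm.monotone_iff]
  obtain _ | k := ℓ
  · exact fun i => i.elim0
  exact Fin.monotone_iff_le_succ.2 fun i => (hsucc _ _ rfl).le

end Families

section Determinant

variable {R : Type*} [CommRing R] (x : ℕ → R) {ℓ n m : ℕ} {A B : Fin ℓ → ℤ}
  {p : (_ : Equiv.Perm (Fin ℓ)) × (Fin ℓ → ℤ → ℚ)} {D : ℤ} {a b : Fin ℓ}

noncomputable def signedWeight (A B : Fin ℓ → ℤ)
    (p : (_ : Equiv.Perm (Fin ℓ)) × (Fin ℓ → ℤ → ℚ)) : R :=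
  Equiv.Perm.sign p.1 • ∏ i, strandWeight x (A i) (B (p.1 i)) (p.2 i)

open Classical in
noncomputable def swapAtSite (p : (_ : Equiv.Perm (Fin ℓ)) × (Fin ℓ → ℤ → ℚ)) :
    (_ : Equiv.Perm (Fin ℓ)) × (Fin ℓ → ℤ → ℚ) :=
  if h : ∃ s : ℤ × Fin ℓ × Fin ℓ, IsSwapSite p.2 s.1 s.2.1 s.2.2 then
    ⟨p.1 * Equiv.swap h.choose.2.1 h.choose.2.2,
      swapTails p.2 h.choose.1 h.choose.2.1 h.choose.2.2⟩
  else p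

lemma swapAtSite_eq (hs : IsSwapSite p.2 D a b) :
    swapAtSite p = ⟨p.1 * Equiv.swap a b, swapTails p.2 D a b⟩ := by
  have h : ∃ s : ℤ × Fin ℓ × Fin ℓ, IsSwapSite p.2 s.1 s.2.1 s.2.2 := ⟨(D, a, b), hs⟩
  obtain ⟨h1, h2, h3⟩ := h.choose_spec.unique hs
  rw [swapAtSite, dif_pos h, h1, h2, h3]

open Classical in
theorem sum_signedWeight_hasCrossing (hA : StrictAnti A) :
    ∑ p ∈ (strandFamilies n m A B).filter (fun p => HasCrossing p.2),
      signedWeight x A B p = 0 := by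
  have hsite : ∀ p ∈ (strandFamilies n m A B).filter (fun p => HasCrossing p.2),
      (∀ i, IsStrand n m (A i) (B (p.1 i)) (p.2 i)) ∧ ∃ D a b, IsSwapSite p.2 D a b :=
    fun p hp => by
      obtain ⟨hp, hc⟩ := Finset.mem_filter.1 hp
      exact ⟨mem_strandFamilies.1 hp, exists_isSwapSite hA (mem_strandFamilies.1 hp) hc⟩
  refine Finset.sum_involution (fun p _ => swapAtSite p) (fun p hp => ?_) (fun p hp _ => ?_)
    (fun p hp => ?_) (fun p hp => ?_)
  all_goals
    obtain ⟨ht, D, a, b, hs⟩ := hsite p hp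
    have hab : a ≠ b := hs.crossing.lt.ne
    rw [swapAtSite_eq hs]
  · rw [signedWeight, signedWeight, hs.prod_strandWeight_swapTails hA ht, Equiv.Perm.sign_mul,
      Equiv.Perm.sign_swap hab, mul_neg_one, Units.neg_smul, add_neg_cancel]
  · intro h
    exact hab (Equiv.swap_eq_one_iff.1 (mul_eq_left.1 (congrArg Sigma.fst h)))
  · refine Finset.mem_filter.2 ⟨mem_strandFamilies.2 fun i => ?_, D, a, b,
      (hs.isSwapSite_swapTails (ht b).antitone).crossing⟩
    exact hs.isStrand_swapTails hA ht i
  · rw [swapAtSite_eq (p := ⟨p.1 * Equiv.swap a b, swapTails p.2 D a b⟩)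
      (hs.isSwapSite_swapTails (ht b).antitone)]
    simp only [mul_assoc, Equiv.swap_mul_self, mul_one, swapTails_swapTails]

theorem det_eq_sum_families :
    (Matrix.of fun i j : Fin ℓ =>
        ∑ F ∈ strandFinset n m (A j) (B i), strandWeight x (A j) (B i) F).det =
      ∑ p ∈ strandFamilies n m A B, signedWeight x A B p := by
  rw [Matrix.det_apply, strandFamilies, Finset.sum_sigma]
  refine Finset.sum_congr rfl fun σ _ => ?_
  simp only [signedWeight, Matrix.of_apply, Finset.prod_univ_sum, Finset.smul_sum]

theorem det_eq_sum_nonCrossing (hA : StrictAnti A) (hB : StrictAnti B) :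
    (Matrix.of fun i j : Fin ℓ =>
        ∑ F ∈ strandFinset n m (A j) (B i), strandWeight x (A j) (B i) F).det =
      ∑ t ∈ nonCrossingFamilies n m A B, ∏ i, strandWeight x (A i) (B i) (t i) := by
  classical
  rw [det_eq_sum_families, ← Finset.sum_filter_add_sum_filter_not _ (fun p => HasCrossing p.2),
    sum_signedWeight_hasCrossing x hA, zero_add, Finset.sum_filter, strandFamilies,
    Finset.sum_sigma, Finset.sum_eq_single (1 : Equiv.Perm (Fin ℓ))]
  · rw [nonCrossingFamilies, Finset.sum_filter]
    simp [signedWeight]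
  · intro σ _ hσ
    refine Finset.sum_eq_zero fun t ht => if_neg fun hnc => hσ ?_
    exact eq_one_of_not_hasCrossing hB (by simpa using ht) hnc
  · simp

end Determinant

section OneRow

variable {n m k : ℕ} {A B : ℤ} {T : ℕ × ℕ → ℕ} {F : ℤ → ℚ} {c : ℕ × ℕ}

abbrev rowCells (k : ℕ) : Finset (ℕ × ℕ) := skewCells (rowShape k) (fun _ => 0) 1

lemma mem_rowCells : c ∈ rowCells k ↔ c.1 = 1 ∧ 1 ≤ c.2 ∧ c.2 ≤ k := by
  simp only [skewCells, rowShape, Finset.mem_filter, Finset.mem_product, Finset.mem_Icc]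
  split_ifs <;> omega

variable (n m A B) in
/-- A one-row `(n + 1 + A)`-lecture hall tableau read as a strand: its cell `(1, j)` gets content
`A + j`, whose denominator `den n (A + j)` is the cell's `(n + 1 + A) + j - 1`. -/
def strandOfRow (T : ℕ × ℕ → ℕ) : ℤ → ℚ :=
  strandOf n m A B fun d => T (1, (d - A).toNat)

variable (n A B) in
def rowOfStrand (F : ℤ → ℚ) (c : ℕ × ℕ) : ℕ :=
  if c ∈ rowCells (B - A).toNat then strandEntry n F (A + c.2) else 0

lemma strandOfRow_rowOfStrand (hF : IsStrand n m A B F) :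
    strandOfRow n m A B (rowOfStrand n A B F) = F := by
  refine (strandOf_congr fun d ⟨h1, h2⟩ => ?_).trans hF.strandOf_strandEntry
  rw [rowOfStrand, if_pos (mem_rowCells.2 ⟨rfl, ?_, ?_⟩)]
  · congr 1; omega
  all_goals omega

lemma rowOfStrand_strandOfRow (hn : -(n : ℤ) ≤ A)
    (hT : ∀ c ∉ rowCells (B - A).toNat, T c = 0) :
    rowOfStrand n A B (strandOfRow n m A B T) = T := by
  funext c
  rw [rowOfStrand]
  split_ifs with hc
  · obtain ⟨h1, h2, h3⟩ := mem_rowCells.1 hc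
    rw [strandOfRow, strandEntry_strandOf hn (by omega) (by omega)]
    congr 1
    ext <;> dsimp only <;> omega
  · exact (hT c hc).symm

theorem mem_LHTb_row_iff (hn : -(n : ℤ) ≤ A) (hAB : A ≤ B) :
    T ∈ LHTb (n + 1 + A).toNat m (rowCells (B - A).toNat) ↔
      (∀ c ∉ rowCells (B - A).toNat, T c = 0) ∧
        IsStrand n m A B (strandOfRow n m A B T) := by
  rw [strandOfRow, isStrand_strandOf_iff hn hAB]
  have hcell : ∀ j, (1, j) ∈ rowCells (B - A).toNat ↔
      A < A + j ∧ A + j ≤ B := fun j => by rw [mem_rowCells]; omega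
  refine ⟨fun ⟨hsupp, hrow, _, hbound⟩ => ⟨hsupp, fun d h1 h2 => ?_, fun d h1 h2 => ?_⟩,
    fun ⟨hsupp, hrow, hbound⟩ => ⟨hsupp, fun i j hc hc' => ?_, fun i j hc hc' => ?_,
      fun c hc => ?_⟩⟩
  · obtain ⟨j, rfl⟩ : ∃ j : ℕ, d = A + j := ⟨(d - A).toNat, by omega⟩
    have := hrow 1 j ((hcell j).2 ⟨h1, h2.le⟩) ((hcell (j + 1)).2 ⟨by omega, by omega⟩)
    dsimp only
    convert this using 5 <;> (try unfold den) <;> omega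
  · obtain ⟨j, rfl⟩ : ∃ j : ℕ, d = A + j := ⟨(d - A).toNat, by omega⟩
    have := hbound (1, j) ((hcell j).2 ⟨h1, h2⟩)
    dsimp only at this ⊢
    convert this using 5 <;> (try unfold den) <;> omega
  · obtain ⟨rfl, h1, h2⟩ := mem_rowCells.1 hc
    have := hrow (A + j) (by omega) (by rw [mem_rowCells] at hc'; omega)
    dsimp only at this
    convert this using 5 <;> (try unfold den) <;> omega
  · rw [mem_rowCells] at hc hc'; omega
  · obtain ⟨i, j⟩ := c
    obtain ⟨rfl, h1, h2⟩ := mem_rowCells.1 hc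
    have := hbound (A + j) (by omega) (by omega)
    dsimp only at this ⊢
    convert this using 5 <;> (try unfold den) <;> omega

variable {R : Type*} [CommSemiring R] (x : ℕ → R)

lemma prod_rowCells_eq_strandWeight (hn : -(n : ℤ) ≤ A) (hAB : A ≤ B) :
    ∏ c ∈ rowCells (B - A).toNat,
        x (T c / ((n + 1 + A).toNat + c.2 - c.1)) =
      strandWeight x A B (strandOfRow n m A B T) := by
  refine Finset.prod_nbij' (fun c => A + c.2) (fun d => (1, (d - A).toNat)) ?_ ?_ ?_ ?_ ?_
  all_goals intro c hc
  all_goals simp only [mem_rowCells, Finset.mem_Ioc, true_and] at hc ⊢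
  · omega
  · omega
  · ext <;> dsimp only <;> omega
  · omega
  · rw [strandOfRow, floor_strandOf (d := A + c.2) (by omega) (by omega)]
    congr 2
    · congr 1; ext <;> dsimp only <;> omega
    · unfold den; omega

theorem lhtRowGF_eq_sum (hn : -(n : ℤ) ≤ A) (B : ℤ) :
    lhtRowGF (n + 1 + A).toNat m (B - A) x =
      ∑ F ∈ strandFinset n m A B, strandWeight x A B F := by
  rcases lt_or_ge B A with hBA | hAB
  · rw [lhtRowGF, if_pos (by omega)]
    exact (Finset.sum_eq_zero fun F hF =>
      absurd (mem_strandFinset.1 hF).source_le_sink (not_le.2 hBA)).symm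
  rw [lhtRowGF, if_neg (by omega), lhtGF, ← finsum_mem_coe_finset]
  refine finsum_mem_eq_of_bijOn (strandOfRow n m A B) ⟨fun T hT => ?_, fun T hT T' hT' h => ?_,
    fun F hF => ?_⟩ fun T hT => prod_rowCells_eq_strandWeight x hn hAB
  · exact mem_strandFinset.2 ((mem_LHTb_row_iff hn hAB).1 hT).2
  · rw [← rowOfStrand_strandOfRow hn ((mem_LHTb_row_iff hn hAB).1 hT).1,
      ← rowOfStrand_strandOfRow hn ((mem_LHTb_row_iff hn hAB).1 hT').1, h]
  · have hF := mem_strandFinset.1 hF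
    refine ⟨rowOfStrand n A B F, (mem_LHTb_row_iff hn hAB).2 ⟨fun c hc => if_neg hc, ?_⟩,
      strandOfRow_rowOfStrand hF⟩
    rwa [strandOfRow_rowOfStrand hF]

end OneRow

section Skew

variable {n m ℓ : ℕ} {l mu p : ℕ → ℕ} {T : ℕ × ℕ → ℕ} {t : Fin ℓ → ℤ → ℚ}
  {c : ℕ × ℕ} {i : Fin ℓ} {d : ℤ}

/-- The content of the last cell in row `i + 1` of the partition `p`. -/
def lastContent (p : ℕ → ℕ) (i : Fin ℓ) : ℤ := p (i.1 + 1) - (i.1 + 1)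

lemma lastContent_strictAnti (hp : ∀ i j, 1 ≤ i → i ≤ j → p j ≤ p i) :
    StrictAnti (lastContent (ℓ := ℓ) p) := fun a b h => by
  have hab := Fin.lt_def.1 h
  have := hp (a.1 + 1) (b.1 + 1) (by omega) (by omega)
  unfold lastContent; omega

lemma neg_le_lastContent (hn : ℓ ≤ n) (i : Fin ℓ) : -(n : ℤ) ≤ lastContent p i := by
  have := i.2
  unfold lastContent; omega

lemma lastContent_le_lastContent (hsub : ∀ i, 1 ≤ i → mu i ≤ l i) (i : Fin ℓ) :
    lastContent mu i ≤ lastContent l i := by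
  have := hsub (i.1 + 1) (by omega)
  unfold lastContent; omega

section Cells

variable (hl : ∀ i j, 1 ≤ i → i ≤ j → l j ≤ l i)
include hl

lemma mem_skewCells :
    c ∈ skewCells l mu ℓ ↔ 1 ≤ c.1 ∧ c.1 ≤ ℓ ∧ mu c.1 < c.2 ∧ c.2 ≤ l c.1 := by
  have := hl 1 c.1 le_rfl
  simp only [skewCells, Finset.mem_filter, Finset.mem_product, Finset.mem_Icc]
  constructor
  · rintro ⟨⟨⟨h1, h2⟩, -⟩, h3, h4⟩; exact ⟨h1, h2, h3, h4⟩
  · rintro ⟨h1, h2, h3, h4⟩; exact ⟨⟨⟨h1, h2⟩, by omega, by omega⟩, h3, h4⟩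

lemma mk_mem_skewCells :
    (i.1 + 1, (d + i.1 + 1).toNat) ∈ skewCells l mu ℓ ↔
      lastContent mu i < d ∧ d ≤ lastContent l i := by
  have := i.2
  rw [mem_skewCells hl]; unfold lastContent; dsimp only; omega

lemma exists_of_mem_skewCells (hc : c ∈ skewCells l mu ℓ) :
    ∃ (i : Fin ℓ) (d : ℤ), lastContent mu i < d ∧ d ≤ lastContent l i ∧
      c = (i.1 + 1, (d + i.1 + 1).toNat) := by
  obtain ⟨h1, h2, h3, h4⟩ := (mem_skewCells hl).1 hc
  refine ⟨⟨c.1 - 1, by omega⟩, c.2 - c.1, ?_⟩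
  unfold lastContent; dsimp only
  rw [show c.1 - 1 + 1 = c.1 by omega]
  exact ⟨by omega, by omega, Prod.ext rfl (by dsimp only; omega)⟩

end Cells

variable (n m ℓ l mu) in
/-- Row `i + 1` of a skew tableau read as a strand: its cell `(i + 1, j)` has content
`j - i - 1`. -/
def strandsOfSkew (T : ℕ × ℕ → ℕ) (i : Fin ℓ) : ℤ → ℚ :=
  strandOf n m (lastContent mu i) (lastContent l i) fun d => T (i.1 + 1, (d + i.1 + 1).toNat)

variable (n ℓ l mu) in
def skewOfStrands (t : Fin ℓ → ℤ → ℚ) (c : ℕ × ℕ) : ℕ :=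
  if h : c ∈ skewCells l mu ℓ ∧ c.1 - 1 < ℓ then strandEntry n (t ⟨c.1 - 1, h.2⟩) (c.2 - c.1)
  else 0

lemma den_eq_cell (hn : ℓ ≤ n) (h : lastContent mu i < d) :
    den n d = n + (d + i.1 + 1).toNat - (i.1 + 1) := by
  have := i.2
  unfold den; unfold lastContent at h; omega

lemma strandsOfSkew_skewOfStrands (hl : ∀ i j, 1 ≤ i → i ≤ j → l j ≤ l i)
    (ht : ∀ i, IsStrand n m (lastContent mu i) (lastContent l i) (t i)) :
    strandsOfSkew n m ℓ l mu (skewOfStrands n ℓ l mu t) = t := by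
  funext i
  refine (strandOf_congr fun d ⟨h1, h2⟩ => ?_).trans (ht i).strandOf_strandEntry
  rw [skewOfStrands, dif_pos ⟨(mk_mem_skewCells hl).2 ⟨h1, h2⟩, by dsimp only; omega⟩]
  congr 2
  unfold lastContent at h1
  dsimp only; omega

section Tableau

variable (hl : ∀ i j, 1 ≤ i → i ≤ j → l j ≤ l i) (hn : ℓ ≤ n)
include hl hn

lemma skewOfStrands_strandsOfSkew (hT : ∀ c ∉ skewCells l mu ℓ, T c = 0) :
    skewOfStrands n ℓ l mu (strandsOfSkew n m ℓ l mu T) = T := by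
  funext c
  by_cases hc : c ∈ skewCells l mu ℓ
  · obtain ⟨i, d, h1, h2, rfl⟩ := exists_of_mem_skewCells hl hc
    calc skewOfStrands n ℓ l mu (strandsOfSkew n m ℓ l mu T) (i.1 + 1, (d + i.1 + 1).toNat)
        = strandEntry n (strandsOfSkew n m ℓ l mu T i) d := by
          rw [skewOfStrands, dif_pos ⟨hc, by dsimp only; omega⟩]
          congr 1
          unfold lastContent at h1
          dsimp only; omega
      _ = T (i.1 + 1, (d + i.1 + 1).toNat) := strandEntry_strandOf (neg_le_lastContent hn i) h1 h2
  · rw [skewOfStrands, dif_neg fun h => hc h.1, hT c hc]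

lemma forall_isLectureHallRow_iff :
    (∀ i : Fin ℓ, IsLectureHallRow n m (lastContent mu i) (lastContent l i)
        fun d => T (i.1 + 1, (d + i.1 + 1).toNat)) ↔
      (∀ i j, (i, j) ∈ skewCells l mu ℓ → (i, j + 1) ∈ skewCells l mu ℓ →
        T (i, j + 1) * (n + j - i) ≤ T (i, j) * (n + j + 1 - i)) ∧
      ∀ c ∈ skewCells l mu ℓ, T c / (n + c.2 - c.1) < m := by
  have hsucc : ∀ (i : Fin ℓ) d, lastContent mu i < d →
      (d + 1 + i.1 + 1).toNat = (d + i.1 + 1).toNat + 1 := fun i d h => by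
    unfold lastContent at h; omega
  constructor
  · intro h
    refine ⟨fun i' j hc hc' => ?_, fun c hc => ?_⟩
    · obtain ⟨i, d, h1, h2, hcd⟩ := exists_of_mem_skewCells hl hc
      obtain ⟨rfl, rfl⟩ := Prod.ext_iff.1 hcd
      dsimp only at hc' ⊢
      rw [← hsucc i d h1, mk_mem_skewCells hl] at hc'
      have := (h i).1 d h1 (by omega)
      dsimp only at this
      rwa [den_eq_cell hn h1, den_eq_cell hn (show lastContent mu i < d + 1 by omega),
        hsucc i d h1, ← add_assoc] at this
    · obtain ⟨i, d, h1, h2, rfl⟩ := exists_of_mem_skewCells hl hc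
      have := (h i).2 d h1 h2
      rwa [den_eq_cell hn h1] at this
  · rintro ⟨hrow, hbound⟩ i
    refine ⟨fun d h1 h2 => ?_, fun d h1 h2 => ?_⟩
    · have := hrow _ _ ((mk_mem_skewCells hl).2 ⟨h1, h2.le⟩)
        (by rw [← hsucc i d h1, mk_mem_skewCells hl]; omega)
      dsimp only
      rwa [den_eq_cell hn h1, den_eq_cell hn (show lastContent mu i < d + 1 by omega),
        hsucc i d h1, ← add_assoc]
    · have := hbound _ ((mk_mem_skewCells hl).2 ⟨h1, h2⟩)
      rwa [den_eq_cell hn h1]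

omit hl in
lemma strandsOfSkew_sub_one_lt_iff {a b : Fin ℓ} (hab : a.1 + 1 = b.1)
    (h1 : lastContent mu a < d) (h2 : d ≤ lastContent l a) (h3 : lastContent mu b < d - 1)
    (h4 : d - 1 ≤ lastContent l b) :
    strandsOfSkew n m ℓ l mu T b (d - 1) < strandsOfSkew n m ℓ l mu T a d ↔
      T (a.1 + 1 + 1, (d + a.1 + 1).toNat) * (n + (d + a.1 + 1).toNat - (a.1 + 1)) <
        T (a.1 + 1, (d + a.1 + 1).toNat) * (n + (d + a.1 + 1).toNat - (a.1 + 1) - 1) := by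
  have hpos : ∀ {i : Fin ℓ} {d}, lastContent mu i < d → (0 : ℚ) < den n d := fun {i} _ h =>
    Nat.cast_pos.2 (den_pos (neg_le_lastContent hn i) h)
  rw [strandsOfSkew, strandsOfSkew, strandOf_of_mem h3 h4, strandOf_of_mem h1 h2,
    div_lt_div_iff₀ (hpos h3) (hpos h1), den_eq_cell hn h1, den_eq_cell hn h3, ← hab,
    show (d - 1 + (a.1 + 1 : ℕ) + 1).toNat = (d + a.1 + 1).toNat by omega,
    show n + (d + a.1 + 1).toNat - (a.1 + 1 + 1) = n + (d + a.1 + 1).toNat - (a.1 + 1) - 1 by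
      omega]
  exact_mod_cast Iff.rfl

lemma not_hasCrossing_strandsOfSkew_iff (hmu : ∀ i j, 1 ≤ i → i ≤ j → mu j ≤ mu i)
    (ht : ∀ i, IsStrand n m (lastContent mu i) (lastContent l i)
      (strandsOfSkew n m ℓ l mu T i)) :
    ¬ HasCrossing (strandsOfSkew n m ℓ l mu T) ↔
      ∀ i j, (i, j) ∈ skewCells l mu ℓ → (i + 1, j) ∈ skewCells l mu ℓ →
        T (i + 1, j) * (n + j - i) < T (i, j) * (n + j - i - 1) := by
  have hA := lastContent_strictAnti (ℓ := ℓ) hmu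
  have hcell : ∀ (a b : Fin ℓ) (d : ℤ), a.1 + 1 = b.1 →
      (a.1 + 1 + 1, (d + a.1 + 1).toNat) = (b.1 + 1, (d - 1 + b.1 + 1).toNat) :=
    fun a b d hab => by ext <;> dsimp only <;> omega
  constructor
  · intro h i' j hc hc'
    obtain ⟨a, d, h1, h2, hcd⟩ := exists_of_mem_skewCells hl hc
    obtain ⟨rfl, rfl⟩ := Prod.ext_iff.1 hcd
    dsimp only at hc' ⊢
    have hb : a.1 + 1 < ℓ := by rw [mem_skewCells hl] at hc'; dsimp only at hc'; omega
    rw [hcell a ⟨a.1 + 1, hb⟩ d rfl, mk_mem_skewCells hl] at hc'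
    exact (strandsOfSkew_sub_one_lt_iff hn rfl h1 h2 hc'.1 hc'.2).1
      (not_le.1 fun hle => h ⟨d, a, ⟨a.1 + 1, hb⟩, rfl, hle⟩)
  · rintro hcol ⟨d, a, b, hc⟩
    have hab := hc.succ_eq
    have hAab := hA hc.lt
    refine not_lt.2 hc.le ((ht a).lt_of_interior (ht b) hAab
      (lastContent_strictAnti hl hc.lt) (fun d h1 h2 h3 => ?_) d)
    have h0 : lastContent mu b < d - 1 := by omega
    refine (strandsOfSkew_sub_one_lt_iff hn hab h1 h2 h0 h3).2
      (hcol _ _ ((mk_mem_skewCells hl).2 ⟨h1, h2⟩) ?_)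
    rw [hcell a b d hab, mk_mem_skewCells hl]
    exact ⟨h0, h3⟩

theorem mem_LHTb_skewCells_iff (hmu : ∀ i j, 1 ≤ i → i ≤ j → mu j ≤ mu i)
    (hsub : ∀ i, 1 ≤ i → mu i ≤ l i) :
    T ∈ LHTb n m (skewCells l mu ℓ) ↔ (∀ c ∉ skewCells l mu ℓ, T c = 0) ∧
      strandsOfSkew n m ℓ l mu T ∈
        nonCrossingFamilies n m (lastContent mu) (lastContent l) := by
  have hstrand := forall_isLectureHallRow_iff (m := m) (mu := mu) (T := T) hl hn
  simp only [← isStrand_strandOf_iff (neg_le_lastContent hn _)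
    (lastContent_le_lastContent hsub _)] at hstrand
  rw [mem_nonCrossingFamilies]
  constructor
  · rintro ⟨hsupp, hrow, hcol, hbound⟩
    have ht := hstrand.2 ⟨hrow, hbound⟩
    exact ⟨hsupp, ht, (not_hasCrossing_strandsOfSkew_iff hl hn hmu ht).2 hcol⟩
  · rintro ⟨hsupp, ht, hnc⟩
    obtain ⟨hrow, hbound⟩ := hstrand.1 ht
    exact ⟨hsupp, hrow, (not_hasCrossing_strandsOfSkew_iff hl hn hmu ht).1 hnc, hbound⟩

variable {R : Type*} [CommSemiring R] (x : ℕ → R)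

lemma prod_skewCells_eq_prod_strandWeight :
    ∏ c ∈ skewCells l mu ℓ, x (T c / (n + c.2 - c.1)) =
      ∏ i, strandWeight x (lastContent mu i) (lastContent l i)
        (strandsOfSkew n m ℓ l mu T i) := by
  simp only [strandWeight]
  rw [Finset.prod_sigma']
  symm
  refine Finset.prod_nbij (fun p => (p.1.1 + 1, (p.2 + p.1.1 + 1).toNat)) ?_ ?_ ?_ ?_
  · rintro ⟨i, d⟩ h
    simp only [Finset.mem_sigma, Finset.mem_univ, Finset.mem_Ioc, true_and] at h
    exact (mk_mem_skewCells hl).2 h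
  · rintro ⟨i, d⟩ h ⟨i', d'⟩ h' heq
    simp only [Finset.coe_sigma, Set.mem_sigma_iff, Finset.coe_univ, Set.mem_univ,
      Finset.coe_Ioc, Set.mem_Ioc, true_and] at h h'
    obtain ⟨h1, h2⟩ := Prod.ext_iff.1 heq
    obtain rfl : i = i' := Fin.ext (by simpa using h1)
    unfold lastContent at h h'
    simp only [Sigma.mk.injEq, heq_eq_eq, true_and]
    simp only at h2
    omega
  · intro c hc
    obtain ⟨i, d, h1, h2, rfl⟩ := exists_of_mem_skewCells hl hc
    exact ⟨⟨i, d⟩, by simpa using ⟨h1, h2⟩, rfl⟩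
  · rintro ⟨i, d⟩ h
    simp only [Finset.mem_sigma, Finset.mem_univ, Finset.mem_Ioc, true_and] at h
    rw [strandsOfSkew, floor_strandOf h.1 h.2, den_eq_cell hn h.1]

theorem lhtGF_skewCells_eq_sum (hmu : ∀ i j, 1 ≤ i → i ≤ j → mu j ≤ mu i)
    (hsub : ∀ i, 1 ≤ i → mu i ≤ l i) :
    lhtGF n m (skewCells l mu ℓ) x =
      ∑ t ∈ nonCrossingFamilies (ℓ := ℓ) n m (lastContent mu) (lastContent l),
        ∏ i, strandWeight x (lastContent mu i) (lastContent l i) (t i) := by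
  have hmem := fun T => mem_LHTb_skewCells_iff (n := n) (m := m) (T := T) hl hn hmu hsub
  rw [lhtGF, ← finsum_mem_coe_finset]
  refine finsum_mem_eq_of_bijOn (strandsOfSkew n m ℓ l mu) ⟨fun T hT => ((hmem T).1 hT).2,
    fun T hT T' hT' h => ?_, fun t ht => ?_⟩
    fun T _ => prod_skewCells_eq_prod_strandWeight hl hn x
  · rw [← skewOfStrands_strandsOfSkew hl hn ((hmem T).1 hT).1,
      ← skewOfStrands_strandsOfSkew hl hn ((hmem T').1 hT').1, h]
  · have ht' := (mem_nonCrossingFamilies.1 ht).1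
    refine ⟨skewOfStrands n ℓ l mu t, (hmem _).2 ⟨fun c hc => dif_neg fun h => hc h.1, ?_⟩,
      strandsOfSkew_skewOfStrands hl ht'⟩
    rwa [strandsOfSkew_skewOfStrands hl ht']

end Tableau

end Skew

end LectureHall

theorem lht_jacobi_trudi_general (n m ℓ : ℕ) (l mu : ℕ → ℕ)
    (hl : ∀ i j, 1 ≤ i → i ≤ j → l j ≤ l i)
    (hmu : ∀ i j, 1 ≤ i → i ≤ j → mu j ≤ mu i)
    (hsub : ∀ i, 1 ≤ i → mu i ≤ l i)
    (hn : ℓ ≤ n) :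
    lhtGF n m (skewCells l mu ℓ) (fun r => (MvPolynomial.X r : MvPolynomial ℕ ℤ)) =
      Matrix.det (Matrix.of fun i j : Fin ℓ =>
        lhtRowGF (mu (j.1 + 1) + n - (j.1 + 1) + 1) m
          ((l (i.1 + 1) : ℤ) - (mu (j.1 + 1) : ℤ) - ((i.1 : ℤ) + 1) + ((j.1 : ℤ) + 1))
          (fun r => (MvPolynomial.X r : MvPolynomial ℕ ℤ))) := by
  rw [LectureHall.lhtGF_skewCells_eq_sum hl hn _ hmu hsub,
    ← LectureHall.det_eq_sum_nonCrossing _ (LectureHall.lastContent_strictAnti hmu)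
      (LectureHall.lastContent_strictAnti hl)]
  congr 1
  refine Matrix.ext fun i j => ?_
  have hj := j.2
  rw [Matrix.of_apply, Matrix.of_apply,
    ← LectureHall.lhtRowGF_eq_sum _ (LectureHall.neg_le_lastContent hn j)]
  congr 1 <;> unfold LectureHall.lastContent <;> omega

/-- **Jacobi–Trudi identity for lecture hall tableaux.**
`L^n_{λ/μ}(x_0,…,x_{m-1}) = det( L^{μ_j+n-j+1}_{(λ_i-μ_j-i+j)}(x_0,…,x_{m-1}) )_{1≤i,j≤ℓ}`,
where for a one-row shape `(k)` one sets `L^N_{(k)} = 1` if `k = 0` and `0` if `k < 0`.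
Here `X r` denotes `x_r`. -/
theorem lht_jacobi_trudi (n m ℓ : ℕ) (l mu : ℕ → ℕ)
    (hl : ∀ i j, 1 ≤ i → i ≤ j → l j ≤ l i)
    (hl0 : ∀ i, ℓ < i → l i = 0)
    (hlpos : ∀ i, 1 ≤ i → i ≤ ℓ → 0 < l i)
    (hmu : ∀ i j, 1 ≤ i → i ≤ j → mu j ≤ mu i)
    (hsub : ∀ i, 1 ≤ i → mu i ≤ l i)
    (hn : ℓ ≤ n) :
    lhtGF n m (skewCells l mu ℓ) (fun r => (MvPolynomial.X r : MvPolynomial ℕ ℤ)) =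
      Matrix.det (Matrix.of fun i j : Fin ℓ =>
        lhtRowGF (mu (j.1 + 1) + n - (j.1 + 1) + 1) m
          ((l (i.1 + 1) : ℤ) - (mu (j.1 + 1) : ℤ) - ((i.1 : ℤ) + 1) + ((j.1 : ℤ) + 1))
          (fun r => (MvPolynomial.X r : MvPolynomial ℕ ℤ))) :=
  lht_jacobi_trudi_general n m ℓ l mu hl hmu hsub hn
end

section
/- Let n ≥ 1 and k, m ≥ 0. Then, as polynomials in x_0,…,x_{m−1}, the generating polynomial of single-row n-lecture hall tableaux satisfies L^n_{(k)}(x_0,…,x_{m−1}) = (x_0 + x_1 + … + x_{m−1})^k · binom(n+k−1, k). -/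
open Finset MvPolynomial

/-!
Write the entries of a one-row lecture hall tableau as `L_j = q_j (n + j - 1) + r_j` with
`0 ≤ r_j < n + j - 1`. The lecture hall inequalities say exactly that the pairs `(q_j, r_j)`
decrease weakly in lexicographic order, so the tableau is a concatenation of runs of constant
quotient `q`, each with weakly decreasing remainders. A run of length `t` of top quotient `q`
whose remainders are at most `r` can be chosen in `C(r + t, t)` ways; peeling off the first
entry gives a recursion in the bound on that entry, which is solved in closed form
(`runPoly`) by induction on `k`, using the hockey-stick identity and
`C(n - 1 + t, t) C(n + k - 1, k - t) = C(n + k - 1, k) C(k, t)` to collapse everything into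
the binomial expansion of `(x_0 + ⋯ + x_{m-1})^k`.
-/

namespace LectureHallRow

/-- The `j`-th entry is read with denominator `n + j`; the lecture hall inequality
`w * n ≤ v * (n + 1)` between consecutive entries `v, w` is `w < v + v / n + 1`. -/
def IsLHChain : ℕ → ℕ → List ℕ → Prop
  | _, _, [] => True
  | n, B, v :: t => v < B ∧ IsLHChain (n + 1) (v + v / n + 1) t

def lhLists : ℕ → ℕ → ℕ → Finset (List ℕ)
  | _, 0, _ => {[]}
  | n, k + 1, B => (range B).biUnion fun v =>
      (lhLists (n + 1) k (v + v / n + 1)).map ⟨(v :: ·), List.cons_injective⟩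

lemma mem_lhLists {n k B : ℕ} {l : List ℕ} :
    l ∈ lhLists n k B ↔ l.length = k ∧ IsLHChain n B l := by
  induction k generalizing n B l with
  | zero => cases l <;> simp [lhLists, IsLHChain]
  | succ k ih =>
    cases l with
    | nil => simp [lhLists]
    | cons v t => simp [lhLists, IsLHChain, ih, and_left_comm]

lemma mul_le_mul_succ_iff {n : ℕ} (hn : 0 < n) (w v : ℕ) :
    w * n ≤ v * (n + 1) ↔ w < v + v / n + 1 := by
  rw [Nat.lt_add_one_iff, show v * (n + 1) = v + v * n by ring, ← Nat.le_div_iff_mul_le hn,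
    Nat.add_mul_div_right _ _ hn, add_comm]

lemma isLHChain_iff {n : ℕ} (hn : 0 < n) (B : ℕ) (l : List ℕ) :
    IsLHChain n B l ↔ (0 < l.length → l.getD 0 0 < B) ∧
      ∀ j, j + 1 < l.length → l.getD (j + 1) 0 * (n + j) ≤ l.getD j 0 * (n + j + 1) := by
  induction l generalizing n B with
  | nil => simp [IsLHChain]
  | cons v t ih =>
    simp only [IsLHChain, ih (n := n + 1) (by omega), List.length_cons, List.getD_cons_zero,
      List.getD_cons_succ, ← mul_le_mul_succ_iff hn]
    constructor
    · rintro ⟨hv, hhead, htail⟩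
      refine ⟨fun _ => hv, ?_⟩
      rintro (_ | j) hj
      · simpa using hhead (by omega)
      · simpa [show n + (j + 1) = n + 1 + j by omega] using htail j (by omega)
    · rintro ⟨hv, hsteps⟩
      refine ⟨hv (by omega), fun ht => by simpa using hsteps 0 (by omega), fun j hj => ?_⟩
      simpa [show n + (j + 1) = n + 1 + j by omega] using hsteps (j + 1) (by omega)

lemma IsLHChain.getD_div_lt {n B m : ℕ} {l : List ℕ} (h : IsLHChain n B l) (hn : 0 < n)
    (hB : B ≤ m * n) {j : ℕ} (hj : j < l.length) : l.getD j 0 / (n + j) < m := by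
  induction l generalizing n B j with
  | nil => simp at hj
  | cons v t ih =>
    obtain ⟨hv, ht⟩ := h
    have hvm : v / n < m := (Nat.div_lt_iff_lt_mul hn).2 (by omega)
    cases j with
    | zero => simpa using hvm
    | succ j =>
      rw [List.getD_cons_succ, show n + (j + 1) = n + 1 + j by omega]
      refine ih ht (by omega) ?_ (by simpa using hj)
      nlinarith [Nat.div_mul_le_self v n]

/-- The one-row lecture hall tableaux of `LHT_{n,m}`, as the list of their entries. -/
def IsLHRow (n m : ℕ) (l : List ℕ) : Prop :=
  (∀ j, j + 1 < l.length → l.getD (j + 1) 0 * (n + j) ≤ l.getD j 0 * (n + j + 1)) ∧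
    ∀ j < l.length, l.getD j 0 / (n + j) < m

lemma mem_lhLists_mul_iff {n m k : ℕ} (hn : 0 < n) {l : List ℕ} :
    l ∈ lhLists n k (m * n) ↔ l.length = k ∧ IsLHRow n m l := by
  rw [mem_lhLists, IsLHRow]
  refine and_congr_right fun _ => ⟨fun h => ?_, fun ⟨hsteps, hdiv⟩ => ?_⟩
  · exact ⟨((isLHChain_iff hn _ _).1 h).2, fun j hj => h.getD_div_lt hn le_rfl hj⟩
  · refine (isLHChain_iff hn _ _).2 ⟨fun hl => ?_, hsteps⟩
    exact (Nat.div_lt_iff_lt_mul hn).1 (by simpa using hdiv 0 hl)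

lemma choose_mul_choose_eq (a k t : ℕ) (ht : t ≤ k) :
    (a + t).choose t * (a + k).choose (k - t) = (a + k).choose k * k.choose t := by
  rw [← Nat.choose_symm ht, Nat.choose_mul (Nat.sub_le k t), mul_comm,
    show a + k - (k - t) = a + t by omega, show k - (k - t) = t by omega]

section Sum

variable {R : Type*} [CommSemiring R] (x : ℕ → R)

def lhWeight (n : ℕ) (l : List ℕ) : R :=
  ∏ j ∈ range l.length, x (l.getD j 0 / (n + j))

lemma lhWeight_cons (n v : ℕ) (t : List ℕ) :
    lhWeight x n (v :: t) = x (v / n) * lhWeight x (n + 1) t := by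
  simp only [lhWeight, List.length_cons, prod_range_succ', List.getD_cons_succ,
    List.getD_cons_zero, add_zero, mul_comm (x (v / n)), add_right_comm n 1, add_assoc]

def lhSum (n k B : ℕ) : R :=
  ∑ l ∈ lhLists n k B, lhWeight x n l

lemma lhSum_zero (n B : ℕ) : lhSum x n 0 B = 1 := by
  simp [lhSum, lhLists, lhWeight]

lemma lhSum_succ (n k B : ℕ) :
    lhSum x n (k + 1) B = ∑ v ∈ range B, x (v / n) * lhSum x (n + 1) k (v + v / n + 1) := by
  rw [lhSum, lhLists, sum_biUnion]
  · simp [lhSum, lhWeight_cons, mul_sum]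
  · intro v _ w _ hvw
    simp only [Function.onFun, disjoint_left, mem_map, Function.Embedding.coeFn_mk]
    rintro _ ⟨t, -, rfl⟩ ⟨s, -, hs⟩
    exact hvw (List.cons_eq_cons.1 hs).1.symm

/-- `lhSum x n k (q * n + r + 1)` for `r < n`: the summand `t` counts the tableaux whose
leading run of quotient `q` has length `t`. -/
def runPoly (n k q r : ℕ) : R :=
  ∑ t ∈ range (k + 1), ((r + t).choose t * (n + k - 1).choose (k - t) : ℕ) *
    (x q ^ t * (∑ i ∈ range q, x i) ^ (k - t))

lemma runPoly_zero (n q r : ℕ) : runPoly x n 0 q r = 1 := by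
  simp [runPoly]

lemma runPoly_top {n : ℕ} (hn : 0 < n) (k q : ℕ) :
    runPoly x n k q (n - 1) = (n + k - 1).choose k * (∑ i ∈ range (q + 1), x i) ^ k := by
  obtain ⟨a, rfl⟩ : ∃ a, n = a + 1 := ⟨n - 1, by omega⟩
  rw [sum_range_succ, add_comm (∑ i ∈ range q, x i), add_pow, mul_sum]
  refine sum_congr rfl fun t ht => ?_
  rw [show a + 1 - 1 = a by omega, show a + 1 + k - 1 = a + k by omega,
    choose_mul_choose_eq a k t (by simpa [Nat.lt_succ_iff] using ht)]
  push_cast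
  ring

lemma runPoly_succ (n k q r : ℕ) :
    runPoly x n (k + 1) q r = (n + k).choose (k + 1) * (∑ i ∈ range q, x i) ^ (k + 1) +
      x q * ∑ s ∈ range (r + 1), runPoly x (n + 1) k q s := by
  simp only [runPoly, sum_comm (s := range (r + 1)), mul_sum]
  rw [sum_range_succ', add_comm]
  congr 1
  · simp [show n + (k + 1) - 1 = n + k by omega]
  refine sum_congr rfl fun t _ => ?_
  rw [← mul_sum, ← sum_mul, ← Nat.cast_sum, ← sum_mul, Nat.sum_range_add_choose,
    show n + (k + 1) - 1 = n + 1 + k - 1 by omega, show k + 1 - (t + 1) = k - t by omega,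
    show r + (t + 1) = r + t + 1 by omega]
  push_cast
  ring

theorem lhSum_eq_runPoly (k : ℕ) : ∀ {n q r : ℕ}, 0 < n → r < n →
    lhSum x n k (q * n + r + 1) = runPoly x n k q r := by
  induction k with
  | zero => intros; rw [lhSum_zero, runPoly_zero]
  | succ k ih =>
    intro n q r hn hr
    have head : ∀ q s, s < n → x ((q * n + s) / n) *
        lhSum x (n + 1) k (q * n + s + (q * n + s) / n + 1) = x q * runPoly x (n + 1) k q s := by
      intro q s hs
      rw [show (q * n + s) / n = q by rw [mul_comm, Nat.mul_add_div hn, Nat.div_eq_of_lt hs,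
          add_zero], show q * n + s + q + 1 = q * (n + 1) + s + 1 by ring, ih (by omega) (by omega)]
    have extend : ∀ q r, r < n → lhSum x n (k + 1) (q * n + r + 1) =
        lhSum x n (k + 1) (q * n) + x q * ∑ s ∈ range (r + 1), runPoly x (n + 1) k q s := by
      intro q r hr
      rw [lhSum_succ, lhSum_succ, add_assoc, sum_range_add, mul_sum]
      exact congrArg _ (sum_congr rfl fun s hs => head q s (by simp at hs; omega))
    have blocks : ∀ q, lhSum x n (k + 1) (q * n) =
        (n + k).choose (k + 1) * (∑ i ∈ range q, x i) ^ (k + 1) := by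
      intro q
      induction q with
      | zero => simp [lhSum_succ]
      | succ q ihq =>
        rw [show (q + 1) * n = q * n + (n - 1) + 1 by rw [add_mul]; omega,
          extend q (n - 1) (by omega), ihq, ← runPoly_succ, runPoly_top x hn,
          show n + (k + 1) - 1 = n + k by omega]
    rw [extend q r hr, blocks, runPoly_succ]

theorem lhSum_eq (n m k : ℕ) (hn : 0 < n) :
    lhSum x n k (m * n) = (n + k - 1).choose k * (∑ i ∈ range m, x i) ^ k := by
  cases m with
  | zero => cases k <;> simp [lhSum_zero, lhSum_succ]
  | succ q =>
    rw [show (q + 1) * n = q * n + (n - 1) + 1 by rw [add_mul]; omega,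
      lhSum_eq_runPoly x k hn (by omega), runPoly_top x hn]

end Sum

lemma mem_rowCells {k i j : ℕ} :
    (i, j) ∈ skewCells (rowShape k) (fun _ => 0) 1 ↔ i = 1 ∧ 1 ≤ j ∧ j ≤ k := by
  simp only [skewCells, rowShape, mem_filter, mem_product, mem_Icc]
  grind

lemma rowCells_eq (k : ℕ) :
    skewCells (rowShape k) (fun _ => 0) 1 = (range k).image fun j => (1, j + 1) := by
  ext ⟨i, j⟩
  rw [mem_rowCells]
  simp only [mem_image, mem_range, Prod.mk.injEq]
  constructor
  · rintro ⟨rfl, hj, hjk⟩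
    exact ⟨j - 1, by omega, rfl, by omega⟩
  · rintro ⟨j, hj, rfl, rfl⟩
    omega

/-- Columns are `1`-indexed, hence the leading `0` (which also makes column `0` vanish). -/
def rowTableau (l : List ℕ) : ℕ × ℕ → ℕ :=
  fun c => if c.1 = 1 then (0 :: l).getD c.2 0 else 0

lemma rowTableau_one_succ (l : List ℕ) (j : ℕ) : rowTableau l (1, j + 1) = l.getD j 0 := by
  simp [rowTableau]

lemma rowTableau_eq_zero {k : ℕ} {l : List ℕ} (hl : l.length = k) {c : ℕ × ℕ}
    (hc : c ∉ skewCells (rowShape k) (fun _ => 0) 1) : rowTableau l c = 0 := by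
  obtain ⟨i, _ | j⟩ := c
  · simp [rowTableau]
  · rw [mem_rowCells] at hc
    by_cases hi : i = 1
    · subst hi
      rw [rowTableau_one_succ, List.getD_eq_default]
      omega
    · simp [rowTableau, hi]

lemma rowTableau_injOn (k : ℕ) : Set.InjOn rowTableau {l : List ℕ | l.length = k} := by
  intro l₁ h₁ l₂ h₂ h
  refine List.ext_getElem (h₁.trans h₂.symm) fun j hj₁ hj₂ => ?_
  have := congrFun h (1, j + 1)
  rwa [rowTableau_one_succ, rowTableau_one_succ, List.getD_eq_getElem _ _ hj₁,
    List.getD_eq_getElem _ _ hj₂] at this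

lemma exists_rowTableau_eq {k : ℕ} {T : ℕ × ℕ → ℕ}
    (hT : ∀ c ∉ skewCells (rowShape k) (fun _ => 0) 1, T c = 0) :
    ∃ l : List ℕ, l.length = k ∧ rowTableau l = T := by
  refine ⟨List.ofFn fun j : Fin k => T (1, j + 1), List.length_ofFn, funext fun c => ?_⟩
  by_cases hc : c ∈ skewCells (rowShape k) (fun _ => 0) 1
  · obtain ⟨i, j⟩ := c
    obtain ⟨rfl, hj, hjk⟩ := mem_rowCells.1 hc
    obtain ⟨j, rfl⟩ : ∃ j', j = j' + 1 := ⟨j - 1, by omega⟩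
    rw [rowTableau_one_succ, List.getD_eq_getElem _ _ (by simp; omega), List.getElem_ofFn]
  · rw [rowTableau_eq_zero List.length_ofFn hc, hT c hc]

lemma rowTableau_mem_LHTb_iff {n m k : ℕ} {l : List ℕ} (hl : l.length = k) :
    rowTableau l ∈ LHTb n m (skewCells (rowShape k) (fun _ => 0) 1) ↔ IsLHRow n m l := by
  have succ_cell : ∀ {i j}, (i, j) ∈ skewCells (rowShape k) (fun _ => 0) 1 →
      i = 1 ∧ ∃ j', j = j' + 1 ∧ j' < k := fun {i j} hc => by
    obtain ⟨rfl, hj, hjk⟩ := mem_rowCells.1 hc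
    exact ⟨rfl, j - 1, by omega, by omega⟩
  constructor
  · rintro ⟨-, hrow, -, hdiv⟩
    refine ⟨fun j hj => ?_, fun j hj => ?_⟩
    · have := hrow 1 (j + 1) (mem_rowCells.2 (by omega)) (mem_rowCells.2 (by omega))
      rwa [rowTableau_one_succ, rowTableau_one_succ, show n + (j + 1) - 1 = n + j by omega,
        show n + (j + 1) + 1 - 1 = n + j + 1 by omega] at this
    · have := hdiv (1, j + 1) (mem_rowCells.2 (by omega))
      rwa [rowTableau_one_succ, show n + (j + 1) - 1 = n + j by omega] at this
  · rintro ⟨hsteps, hdiv⟩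
    refine ⟨fun c hc => rowTableau_eq_zero hl hc, fun i j hc hc' => ?_, fun i j hc hc' => ?_, ?_⟩
    · obtain ⟨rfl, j, rfl, -⟩ := succ_cell hc
      have := (mem_rowCells.1 hc').2.2
      rw [rowTableau_one_succ, rowTableau_one_succ, show n + (j + 1) - 1 = n + j by omega,
        show n + (j + 1) + 1 - 1 = n + j + 1 by omega]
      exact hsteps j (by omega)
    · have := (mem_rowCells.1 hc).1
      have := (mem_rowCells.1 hc').1
      omega
    · rintro ⟨i, j⟩ hc
      obtain ⟨rfl, j, rfl, hj⟩ := succ_cell hc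
      rw [rowTableau_one_succ, show n + (j + 1) - 1 = n + j by omega]
      exact hdiv j (by omega)

lemma LHTb_row_eq {n m k : ℕ} (hn : 0 < n) :
    LHTb n m (skewCells (rowShape k) (fun _ => 0) 1) = rowTableau '' ↑(lhLists n k (m * n)) := by
  ext T
  constructor
  · intro hT
    obtain ⟨l, hl, rfl⟩ := exists_rowTableau_eq hT.1
    exact ⟨l, mem_coe.2 ((mem_lhLists_mul_iff hn).2 ⟨hl, (rowTableau_mem_LHTb_iff hl).1 hT⟩), rfl⟩
  · rintro ⟨l, hl, rfl⟩
    obtain ⟨hlen, hrow⟩ := (mem_lhLists_mul_iff hn).1 hl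
    exact (rowTableau_mem_LHTb_iff hlen).2 hrow

lemma prod_rowTableau {R : Type*} [CommSemiring R] (x : ℕ → R) (n : ℕ) {k : ℕ} {l : List ℕ}
    (hl : l.length = k) :
    ∏ c ∈ skewCells (rowShape k) (fun _ => 0) 1, x (rowTableau l c / (n + c.2 - c.1)) =
      lhWeight x n l := by
  rw [rowCells_eq, prod_image (by simp), lhWeight, hl]
  refine prod_congr rfl fun j _ => ?_
  rw [rowTableau_one_succ, show n + (j + 1) - 1 = n + j by omega]

end LectureHallRow

open LectureHallRow

/-- **Proposition (one-row lecture hall generating polynomial).**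
`L^n_{(k)}(x_0,…,x_{m-1}) = (x_0 + ⋯ + x_{m-1})^k · binom(n+k-1, k)`, for `n ≥ 1`.
Here `X r` denotes `x_r`. -/
theorem lht_one_row_gf (n m k : ℕ) (hn : 1 ≤ n) :
    lhtGF n m (skewCells (rowShape k) (fun _ => 0) 1)
        (fun r => (MvPolynomial.X r : MvPolynomial ℕ ℤ)) =
      MvPolynomial.C (((n + k - 1).choose k : ℤ)) *
        (∑ r ∈ Finset.range m, MvPolynomial.X r) ^ k := by
  rw [lhtGF, LHTb_row_eq hn, finsum_mem_image ((rowTableau_injOn k).mono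
    fun l hl => (mem_lhLists.1 hl).1), finsum_mem_coe_finset,
    sum_congr rfl fun l hl => prod_rowTableau _ n (mem_lhLists.1 hl).1, map_natCast]
  exact lhSum_eq _ n m k hn
end

section
/- Let a, t be nonnegative integers. Then, as polynomials in the variables y_0,…,y_a and X, h_t(y_0 + X, y_1 + X, …, y_a + X) = Σ_{k=0}^{t} h_k(y_0,…,y_a) · X^{t−k} · binom(a+t, t−k). -/
open Finset MvPolynomial

/-! The proof is a double induction on the number of variables and the degree, driven by the
recursion `h_{t+1}(z_0,…,z_{a+1}) = h_{t+1}(z_0,…,z_a) + z_{a+1} h_t(z_0,…,z_{a+1})`. The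
right-hand side satisfies the same recursion: Pascal's rule for `binom(a+t+2, ·)` splits off the
`X · h_t` part, and the recursion for `h_k` itself splits off the `z_{a+1} · h_t` part. -/

section SymInsert

variable {α R : Type*} [DecidableEq α] [CommSemiring R]

theorem filter_notMem_sym_insert {a : α} {s : Finset α} (ha : a ∉ s) (n : ℕ) :
    ((insert a s).sym n).filter (fun m => a ∉ m) = s.sym n := by
  ext m
  simp only [mem_filter, mem_sym_iff, mem_insert]
  constructor
  · rintro ⟨hm, ham⟩ b hb
    exact (hm b hb).resolve_left fun hab => ham (hab ▸ hb)
  · intro hm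
    exact ⟨fun b hb => Or.inr (hm b hb), fun ham => ha (hm a ham)⟩

theorem sum_filter_mem_sym_insert_eq (a : α) (s : Finset α) (n : ℕ) (z : α → R) :
    ∑ m ∈ ((insert a s).sym (n + 1)).filter (fun m => a ∈ m), (m.1.map z).prod =
      z a * ∑ m ∈ (insert a s).sym n, (m.1.map z).prod := by
  rw [mul_sum]
  refine sum_bij' (fun m hm => m.erase a (mem_filter.mp hm).2) (fun m _ => Sym.cons a m)
    ?_ ?_ ?_ ?_ ?_
  · intro m hm
    exact mem_sym_iff.mpr fun b hb =>
      mem_sym_iff.mp (mem_filter.mp hm).1 b (Multiset.mem_of_mem_erase hb)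
  · intro m hm
    refine mem_filter.mpr ⟨mem_sym_iff.mpr fun b hb => ?_, Sym.mem_cons_self a m⟩
    rcases Sym.mem_cons.mp hb with rfl | hb
    · exact mem_insert_self b s
    · exact mem_sym_iff.mp hm b hb
  · intro m _
    exact Sym.cons_erase _
  · intro m _
    exact Sym.erase_cons_head _ _ _
  · intro m hm
    conv_lhs => rw [← Sym.cons_erase (mem_filter.mp hm).2]
    simp [Sym.cons]

theorem sum_sym_insert_succ {a : α} {s : Finset α} (ha : a ∉ s) (n : ℕ) (z : α → R) :
    ∑ m ∈ (insert a s).sym (n + 1), (m.1.map z).prod =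
      ∑ m ∈ s.sym (n + 1), (m.1.map z).prod +
        z a * ∑ m ∈ (insert a s).sym n, (m.1.map z).prod := by
  rw [← sum_filter_not_add_sum_filter _ (fun m => a ∈ m), filter_notMem_sym_insert ha,
    sum_filter_mem_sym_insert_eq]

end SymInsert

section Hpoly

variable {R : Type*} [CommSemiring R]

theorem hpoly_zero_left (a : ℕ) (z : ℕ → R) : hpoly 0 a z = 1 := by
  rw [hpoly, sym_zero, sum_singleton]
  rfl

theorem hpoly_zero_right (k : ℕ) (z : ℕ → R) : hpoly k 0 z = z 0 ^ k := by
  rw [hpoly, show range (0 + 1) = {0} from rfl, sym_singleton, sum_singleton]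
  simp [Sym.replicate]

theorem hpoly_succ_succ (k a : ℕ) (z : ℕ → R) :
    hpoly (k + 1) (a + 1) z = hpoly (k + 1) a z + z (a + 1) * hpoly k (a + 1) z := by
  unfold hpoly
  rw [range_add_one (n := a + 1)]
  exact sum_sym_insert_succ notMem_range_self k z

end Hpoly

section BinomSum

variable {R : Type*} [CommSemiring R]

/-- The right-hand side of the shift identity is `binomSum (h_·(y)) X (a + t) t`. -/
def binomSum (A : ℕ → R) (x : R) (N t : ℕ) : R :=
  ∑ k ∈ range (t + 1), A k * x ^ (t - k) * (N.choose (t - k) : R)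

theorem binomSum_succ_succ (A : ℕ → R) (x : R) (N t : ℕ) :
    binomSum A x (N + 1) (t + 1) = binomSum A x N (t + 1) + x * binomSum A x N t := by
  have pascal : ∀ k ∈ range (t + 1),
      A k * x ^ (t + 1 - k) * ((N + 1).choose (t + 1 - k) : R) =
        A k * x ^ (t + 1 - k) * (N.choose (t + 1 - k) : R) +
          x * (A k * x ^ (t - k) * (N.choose (t - k) : R)) := by
    intro k hk
    rw [Nat.sub_add_comm (mem_range_succ_iff.mp hk), Nat.choose_succ_succ', pow_succ]
    push_cast
    ring
  simp only [binomSum]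
  rw [sum_range_succ, sum_congr rfl pascal, sum_add_distrib, ← mul_sum, sum_range_succ _ (t + 1)]
  simp only [Nat.sub_self, pow_zero, Nat.choose_zero_right]
  ring

theorem binomSum_succ_of_rec {A B : ℕ → R} {w : R} (h₀ : A 0 = B 0)
    (hrec : ∀ k, A (k + 1) = B (k + 1) + w * A k) (x : R) (N t : ℕ) :
    binomSum A x N (t + 1) = binomSum B x N (t + 1) + w * binomSum A x N t := by
  have step : ∀ k ∈ range (t + 1),
      A (k + 1) * x ^ (t + 1 - (k + 1)) * (N.choose (t + 1 - (k + 1)) : R) =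
        B (k + 1) * x ^ (t + 1 - (k + 1)) * (N.choose (t + 1 - (k + 1)) : R) +
          w * (A k * x ^ (t - k) * (N.choose (t - k) : R)) := by
    intro k _
    rw [hrec, Nat.add_sub_add_right]
    ring
  simp only [binomSum]
  rw [sum_range_succ' _ (t + 1), sum_range_succ' (fun k => B k * _ * _) (t + 1),
    sum_congr rfl step, sum_add_distrib, ← mul_sum, h₀]
  ring

end BinomSum

theorem hpoly_add_const {R : Type*} [CommSemiring R] (z : ℕ → R) (x : R) (a t : ℕ) :
    hpoly t a (fun i => z i + x) = binomSum (fun k => hpoly k a z) x (a + t) t := by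
  induction a generalizing t with
  | zero =>
    simp only [hpoly_zero_right, binomSum, zero_add]
    rw [add_pow]
    refine sum_congr rfl fun k hk => ?_
    rw [Nat.choose_symm (mem_range_succ_iff.mp hk)]
  | succ a iha =>
    induction t with
    | zero => simp [binomSum, hpoly_zero_left]
    | succ t iht =>
      rw [hpoly_succ_succ, iha, iht, show a + 1 + (t + 1) = a + (t + 1) + 1 by omega,
        binomSum_succ_succ, binomSum_succ_of_rec (A := (hpoly · (a + 1) z)) (B := (hpoly · a z))
          (by simp only [hpoly_zero_left]) (hpoly_succ_succ · a z),
        show a + 1 + t = a + (t + 1) by omega]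
      ring

/-- The variable `some i` denotes `y_i` and `none` denotes `X`. -/
theorem hpoly_shift (a t : ℕ) :
    hpoly t a (fun i => (MvPolynomial.X (some i) : MvPolynomial (Option ℕ) ℤ) +
        MvPolynomial.X none) =
      ∑ k ∈ Finset.range (t + 1),
        hpoly k a (fun i => (MvPolynomial.X (some i) : MvPolynomial (Option ℕ) ℤ)) *
          (MvPolynomial.X none) ^ (t - k) *
          MvPolynomial.C (((a + t).choose (t - k) : ℤ)) := by
  simp only [map_natCast]
  exact hpoly_add_const _ _ a t
end
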